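/- Let D be a germ of two-dimensional singular holomorphic distribution at 0 ∈ ℂ^n defined by ω = i_Y i_Z Θ, where Y, Z are germs of holomorphic vector fields and Θ is a germ of holomorphic n-form at 0, and codim(sing(ω)) ≥ 2. Let X = fY + gZ be a germ of holomorphic vector field tangent to D, with f, g germs of holomorphic functions at 0. Then X divides D (i.e. there is a germ of (n−1)-form Θ' with ω = i_X Θ') if and only if f(0) ≠ 0 or g(0) ≠ 0. -/

import Mathlib

open Topology Filter Set
open scoped ENNReal Manifold

noncomputable section

/-- `ℂⁿ`. -/
abbrev Cn (n : ℕ) : Type := Fin n → ℂ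

/-- Holomorphic `m`-forms on (open subsets of) `ℂⁿ`, as alternating-map valued functions. -/
abbrev Form (n m : ℕ) : Type := Cn n → AlternatingMap ℂ (Cn n) ℂ (Fin m)

/-- Vector fields on (open subsets of) `ℂⁿ`. -/
abbrev VF (n : ℕ) : Type := Cn n → Cn n

/-- A form is holomorphic on `U` if all its coefficient functions are. -/
def HolFormOn {n m : ℕ} (U : Set (Cn n)) (ω : Form n m) : Prop :=
  ∀ v : Fin m → Cn n, AnalyticOnNhd ℂ (fun z => ω z v) U

/-- A form is holomorphic at (a neighborhood of) a point `c`. -/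
def HolFormAt {n m : ℕ} (c : Cn n) (ω : Form n m) : Prop :=
  ∀ v : Fin m → Cn n, AnalyticAt ℂ (fun z => ω z v) c

/-- The zero locus (singular set) of a form. -/
def zeroLocus {n m : ℕ} (ω : Form n m) : Set (Cn n) := {z | ω z = 0}

/-- `V ⊆ ℂⁿ` has (complex) codimension at least `c`; via Hausdorff dimension
(a complex-analytic set of complex dimension `d` has Hausdorff dimension `2d`).
The empty set has codimension `≥ c` for every `c`. -/
def CodimGE (n : ℕ) (V : Set (Cn n)) (c : ℕ) : Prop :=
  V = ∅ ∨ dimH V + 2 * (c : ℝ≥0∞) ≤ 2 * (n : ℝ≥0∞)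

/-- The germ of `V` at `c` has codimension at least `k`. -/
def GermCodimGE (n : ℕ) (c : Cn n) (V : Set (Cn n)) (k : ℕ) : Prop :=
  ∃ U ∈ 𝓝 c, CodimGE n (V ∩ U) k

/-- `i_X (ω) = 0` at the point `z` : the form `ω` annihilates the vector `X z` at `z`. -/
def TangentAt {n m : ℕ} (ω : Form n m) (X : VF n) (z : Cn n) : Prop :=
  ∀ (v : Fin m → Cn n) (i : Fin m), v i = X z → ω z v = 0

/-- `ω` is locally decomposable (as a wedge of holomorphic `1`-forms) at the points
of `U` where it does not vanish. -/
def LocallyDecomp {n m : ℕ} (U : Set (Cn n)) (ω : Form n m) : Prop :=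
  ∀ z ∈ U, ω z ≠ 0 → ∃ W ∈ 𝓝 z, W ⊆ U ∧ ∃ η : Fin m → Cn n → (Cn n →ₗ[ℂ] ℂ),
    (∀ i (v : Cn n), AnalyticOnNhd ℂ (fun w => η i w v) W) ∧
    ∀ w ∈ W, ∀ v : Fin m → Cn n, ω w v = Matrix.det (Matrix.of fun i j => η i w (v j))

/-- The rank of the derivative (linear part) of a vector field at a point. -/
def rkAt {n : ℕ} (X : VF n) (z : Cn n) : ℕ :=
  Module.finrank ℂ (LinearMap.range (fderiv ℂ X z).toLinearMap)

/-- The germ at `c` of the vector field `X` divides the germ of the `m`-form `ω`: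
`ω = i_X Θ` for some germ of holomorphic `(m+1)`-form `Θ`. -/
def DividesAt {n m : ℕ} (X : VF n) (ω : Form n m) (c : Cn n) : Prop :=
  ∃ Θ : Form n (m + 1), HolFormAt c Θ ∧
    ∀ᶠ z in 𝓝 c, ∀ v : Fin m → Cn n, ω z v = Θ z (Fin.cons (X z) v)

/-- The germ at `0` of an `m`-form defines a singular holomorphic distribution:
it is holomorphic, locally decomposable outside its zero set, and its zero set has
codimension at least two. -/
structure IsGermDist (n m : ℕ) (ω : Form n m) : Prop where
  hol : ∃ U ∈ 𝓝 (0 : Cn n), HolFormOn U ω ∧ LocallyDecomp U ω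
  codim : GermCodimGE n 0 (zeroLocus ω) 2

/-- The tangent sheaf of the germ of two-dimensional distribution defined by the
`m`-form `ω` (`m = n - 2`) is locally free: `ω = i_Y i_Z Θ` for germs of vector fields
`Y, Z` and a germ of `n`-form `Θ`. -/
def GermLocFree2 (n m : ℕ) (ω : Form n m) : Prop :=
  ∃ (Y Z : VF n) (Θ : Form n (m + 2)), AnalyticAt ℂ Y 0 ∧ AnalyticAt ℂ Z 0 ∧ HolFormAt 0 Θ ∧
    ∀ᶠ z in 𝓝 (0 : Cn n), ∀ v : Fin m → Cn n,
      ω z v = Θ z (Fin.cons (Y z) (Fin.cons (Z z) v))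

/-- `ω = i_X i_Y Θ` near `0`, for some germ of vector field `Y` and germ of `n`-form `Θ`. -/
def DivPairAt {n m : ℕ} (X : VF n) (ω : Form n m) : Prop :=
  ∃ (Y : VF n) (Θ : Form n (m + 2)), AnalyticAt ℂ Y 0 ∧ HolFormAt 0 Θ ∧
    ∀ᶠ z in 𝓝 (0 : Cn n), ∀ v : Fin m → Cn n,
      ω z v = Θ z (Fin.cons (X z) (Fin.cons (Y z) v))

/-- The tangent sheaf of the germ of `k`-dimensional distribution defined by the `m`-form
`ω` (`n = k + m`) is locally free: `ω = i_{X_1} ⋯ i_{X_k} Θ`. -/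
def GermLocFreeK (n k m : ℕ) (h : n = k + m) (ω : Form n m) : Prop :=
  ∃ (Xs : Fin k → VF n) (Θ : Form n n), (∀ i, AnalyticAt ℂ (Xs i) 0) ∧ HolFormAt 0 Θ ∧
    ∀ᶠ z in 𝓝 (0 : Cn n), ∀ v : Fin m → Cn n,
      ω z v = Θ z (fun i => Fin.append (fun a => Xs a z) v (Fin.cast h i))

/-- The germs at `c` of the vector fields `Xs` freely generate the germs of vector
fields tangent to the distribution defined by `ω` : every germ of tangent vector field
is a combination of the `Xs` with holomorphic coefficients, and the coefficients in such
combinations are unique (i.e. the `Xs` are independent over the local ring at `c`). -/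
def FreeGensAt {n m : ℕ} (ω : Form n m) {k : ℕ} (Xs : Fin k → VF n) (c : Cn n) : Prop :=
  (∀ Z : VF n, AnalyticAt ℂ Z c → (∀ᶠ z in 𝓝 c, TangentAt ω Z z) →
      ∃ f : Fin k → Cn n → ℂ, (∀ i, AnalyticAt ℂ (f i) c) ∧
        ∀ᶠ z in 𝓝 c, Z z = ∑ i, f i z • Xs i z) ∧
  (∀ f : Fin k → Cn n → ℂ, (∀ i, AnalyticAt ℂ (f i) c) →
      (∀ᶠ z in 𝓝 c, (∑ i, f i z • Xs i z) = 0) → ∀ i, ∀ᶠ z in 𝓝 c, f i z = 0)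

/-- Polydiscs in `ℂⁿ`. -/
def IsPolydisc {n : ℕ} (U : Set (Cn n)) : Prop :=
  ∃ (c : Cn n) (r : Fin n → ℝ), (∀ i, 0 < r i) ∧ U = {z | ∀ i, dist (z i) (c i) < r i}

/-- The wedge product of a `1`-form with a `k`-form, as a function of `k+1` vectors. -/
def wedge1 {n k : ℕ} (ω : Form n 1) (α : Form n k) (z : Cn n) (v : Fin (k + 1) → Cn n) : ℂ :=
  ∑ i : Fin (k + 1), (-1 : ℂ) ^ (i : ℕ) * ω z (fun _ => v i) * α z (fun j => v (i.succAbove j))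

/-! ### Analytic subsets of open sets of `ℂᴺ`, irreducibility, components -/

/-- `V` is an analytic subset of `U`: locally (on `U`) it is the common zero set of
finitely many holomorphic functions. -/
def IsAnalyticIn {N : ℕ} (U V : Set (Cn N)) : Prop :=
  V ⊆ U ∧ ∀ p ∈ U, ∃ W ∈ 𝓝 p, ∃ (r : ℕ) (f : Fin r → Cn N → ℂ),
    (∀ i, AnalyticOnNhd ℂ (f i) W) ∧ ∀ z ∈ W ∩ U, (z ∈ V ↔ ∀ i, f i z = 0)

/-- An irreducible analytic subset of `U`. -/
def IsIrredAnalyticIn {N : ℕ} (U V : Set (Cn N)) : Prop :=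
  IsAnalyticIn U V ∧ V.Nonempty ∧
    ∀ V1 V2, IsAnalyticIn U V1 → IsAnalyticIn U V2 → V = V1 ∪ V2 → V = V1 ∨ V = V2

/-- `C` is an irreducible component of the analytic set `V ⊆ U` : a maximal irreducible
analytic subset of `U` contained in `V`. -/
def IsIrredComponentIn {N : ℕ} (U V C : Set (Cn N)) : Prop :=
  IsIrredAnalyticIn U C ∧ C ⊆ V ∧ ∀ C', IsIrredAnalyticIn U C' → C ⊆ C' → C' ⊆ V → C' = C

/-! ### Distributions and foliations on `ℙⁿ`, in homogeneous coordinates -/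

/-- A `k`-dimensional singular holomorphic distribution of degree `d` on `ℙⁿ`, given in
homogeneous coordinates by a homogeneous `(n-k)`-form `ω` on `ℂⁿ⁺¹` (with polynomial
coefficients of degree `d+1`) satisfying `i_R ω = 0`, locally decomposable outside its
singular set, whose singular set has codimension at least `2`. -/
structure ProjDist (n k : ℕ) where
  d : ℕ
  ω : Form (n + 1) (n - k)
  hol : HolFormOn Set.univ ω
  homog : ∀ (t : ℂ) (z : Cn (n + 1)) (v : Fin (n - k) → Cn (n + 1)),
    ω (t • z) v = t ^ (d + 1) * ω z v
  radial : ∀ (z : Cn (n + 1)) (v : Fin (n - k) → Cn (n + 1)) (i : Fin (n - k)),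
    v i = z → ω z v = 0
  decomp : LocallyDecomp Set.univ ω
  codim : CodimGE (n + 1) {z | z ≠ 0 ∧ ω z = 0} 2

/-- The singular set of a distribution on `ℙⁿ`, as a cone in `ℂⁿ⁺¹ \ {0}`. -/
def ProjDist.coneSing {n k : ℕ} (D : ProjDist n k) : Set (Cn (n + 1)) :=
  {z | z ≠ 0 ∧ D.ω z = 0}

/-- A one-dimensional singular holomorphic foliation of degree `d` on `ℙⁿ`, given in
homogeneous coordinates by a homogeneous polynomial vector field on `ℂⁿ⁺¹`, whose
singular set (points where `V ∧ R = 0`) has codimension at least `2`. -/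
structure ProjFol1 (n : ℕ) where
  d : ℕ
  V : VF (n + 1)
  hol : AnalyticOnNhd ℂ V Set.univ
  homog : ∀ (t : ℂ) (z : Cn (n + 1)), V (t • z) = t ^ d • V z
  codim : CodimGE (n + 1) {z | z ≠ 0 ∧ V z ∈ Submodule.span ℂ {z}} 2

/-- The singular set of a one-dimensional foliation on `ℙⁿ`, as a cone in `ℂⁿ⁺¹ \ {0}`. -/
def ProjFol1.coneSing {n : ℕ} (G : ProjFol1 n) : Set (Cn (n + 1)) :=
  {z | z ≠ 0 ∧ G.V z ∈ Submodule.span ℂ {z}}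

/-- The foliation `G` is tangent to the distribution `D` : `i_V ω = 0`. -/
def PTangent {n k : ℕ} (G : ProjFol1 n) (D : ProjDist n k) : Prop :=
  ∀ (z : Cn (n + 1)) (v : Fin (n - k) → Cn (n + 1)) (i : Fin (n - k)),
    v i = G.V z → D.ω z v = 0

/-- `G` locally divides the two-dimensional distribution `D` at the point of `ℙⁿ`
corresponding to `q ∈ ℂⁿ⁺¹ \ {0}` : in homogeneous coordinates, `ω = i_V i_R Θ` near `q`
for some germ of holomorphic `(n-1)`-form `Θ` (equivalently, in an affine chart at `[q]`,
the defining vector field of `G` divides the defining form of `D`). -/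
def PLocDividesAt {n : ℕ} (G : ProjFol1 n) (D : ProjDist n 2) (q : Cn (n + 1)) : Prop :=
  ∃ Θ : Form (n + 1) (n - 2 + 2), HolFormAt q Θ ∧
    ∀ᶠ z in 𝓝 q, ∀ v : Fin (n - 2) → Cn (n + 1),
      D.ω z v = Θ z (Fin.cons (G.V z) (Fin.cons z v))

/-- The tangent sheaf of the two-dimensional distribution `D` on `ℙⁿ` is locally free:
near every point of `ℂⁿ⁺¹ \ {0}` one can write `ω = i_X i_Y i_R Θ`. -/
def PLocFreeAt {n : ℕ} (D : ProjDist n 2) (q : Cn (n + 1)) : Prop :=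
  ∃ (X Y : VF (n + 1)) (Θ : Form (n + 1) (n - 2 + 3)),
    AnalyticAt ℂ X q ∧ AnalyticAt ℂ Y q ∧ HolFormAt q Θ ∧
    ∀ᶠ z in 𝓝 q, ∀ v : Fin (n - 2) → Cn (n + 1),
      D.ω z v = Θ z (Fin.cons (X z) (Fin.cons (Y z) (Fin.cons z v)))

def PLocFree {n : ℕ} (D : ProjDist n 2) : Prop :=
  ∀ q : Cn (n + 1), q ≠ 0 → PLocFreeAt D q

/-- The linearization, at a singular point `q` (with `ℓ q = 1`), of the vector field
induced on the affine chart `{ℓ = 1}` of `ℙⁿ` by the homogeneous vector field `V`. -/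
def projLin {n : ℕ} (V : VF n) (q : Cn n) (ℓ : Cn n →ₗ[ℂ] ℂ) : Cn n →ₗ[ℂ] Cn n :=
  (fderiv ℂ V q).toLinearMap - LinearMap.smulRight (ℓ ∘ₗ (fderiv ℂ V q).toLinearMap) q
    - ℓ (V q) • LinearMap.id

/-- The linear rank of the one-dimensional foliation `G` on `ℙⁿ` is at least `r` :
at every singular point, the linearization of the vector field induced on an affine
chart has rank at least `r`. -/
def PLinRankGE {n : ℕ} (G : ProjFol1 n) (r : ℕ) : Prop :=
  ∀ q ∈ G.coneSing, ∃ ℓ : Cn (n + 1) →ₗ[ℂ] ℂ, ℓ q = 1 ∧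
    r ≤ Module.finrank ℂ (Submodule.map (projLin G.V q ℓ) (LinearMap.ker ℓ))

/-- `T_D = T_G ⊕ T_H` : in homogeneous coordinates,
`ω = c ⋅ i_{V_G} i_{V_H} i_R (dx_0 ∧ ⋯ ∧ dx_n)` for a nonzero constant `c`. -/
def SplitPair {n : ℕ} (hn : n + 1 = 3 + (n - 2)) (G H : ProjFol1 n) (D : ProjDist n 2) :
    Prop :=
  ∃ c : ℂ, c ≠ 0 ∧ ∀ (z : Cn (n + 1)) (v : Fin (n - 2) → Cn (n + 1)),
    D.ω z v = c * Matrix.det (Matrix.of fun i j =>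
      Fin.append ![G.V z, H.V z, z] v (Fin.cast hn i) j)

/-- The tangent sheaf of the two-dimensional distribution `D` on `ℙⁿ` splits as a direct
sum of two line bundles: `ω = c ⋅ i_{X_1} i_{X_2} i_R (dx_0 ∧ ⋯ ∧ dx_n)` for homogeneous
polynomial vector fields `X_1, X_2` on `ℂⁿ⁺¹`. -/
def PSplits {n : ℕ} (hn : n + 1 = 3 + (n - 2)) (D : ProjDist n 2) : Prop :=
  ∃ (X1 X2 : VF (n + 1)) (d1 d2 : ℕ) (c : ℂ), c ≠ 0 ∧
    AnalyticOnNhd ℂ X1 Set.univ ∧ AnalyticOnNhd ℂ X2 Set.univ ∧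
    (∀ (t : ℂ) (z : Cn (n + 1)), X1 (t • z) = t ^ d1 • X1 z) ∧
    (∀ (t : ℂ) (z : Cn (n + 1)), X2 (t • z) = t ^ d2 • X2 z) ∧
    ∀ (z : Cn (n + 1)) (v : Fin (n - 2) → Cn (n + 1)),
      D.ω z v = c * Matrix.det (Matrix.of fun i j =>
        Fin.append ![X1 z, X2 z, z] v (Fin.cast hn i) j)

/-- The coefficient of the exterior differential of a `1`-form: `dω(a,b)` at `z`. -/
def extd1 {N : ℕ} (ω : Form N 1) (z a b : Cn N) : ℂ :=
  fderiv ℂ (fun y => ω y ![b]) z a - fderiv ℂ (fun y => ω y ![a]) z b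

/-- The Frobenius integrability condition `ω ∧ dω = 0` for a `1`-form. -/
def Integrable1 {N : ℕ} (ω : Form N 1) : Prop :=
  ∀ z a b c : Cn N,
    ω z ![a] * extd1 ω z b c + ω z ![b] * extd1 ω z c a + ω z ![c] * extd1 ω z a b = 0

/-! ### Distributions and foliations on complex manifolds -/

section Manifold

variable {n k : ℕ} {M : Type*} [TopologicalSpace M] [ChartedSpace (Cn n) M]

/-- A `k`-dimensional singular holomorphic distribution on a complex `n`-manifold `M`:
around each point it is given, in the chart at that point, by a holomorphic `(n-k)`-form,
locally decomposable outside its zero set, with zero set of codimension at least 2;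
on overlaps the local forms agree up to a nonvanishing holomorphic factor. -/
structure MDist (n k : ℕ) (M : Type*) [TopologicalSpace M] [ChartedSpace (Cn n) M] where
  ω : M → Form n (n - k)
  dom : M → Set (Cn n)
  dom_open : ∀ p, IsOpen (dom p)
  dom_sub : ∀ p, dom p ⊆ (chartAt (Cn n) p).target
  dom_mem : ∀ p, chartAt (Cn n) p p ∈ dom p
  hol : ∀ p, HolFormOn (dom p) (ω p)
  decomp : ∀ p, LocallyDecomp (dom p) (ω p)
  codim : ∀ p, CodimGE n (zeroLocus (ω p) ∩ dom p) 2
  compat : ∀ p q : M, ∀ x : M, x ∈ (chartAt (Cn n) p).source → x ∈ (chartAt (Cn n) q).source →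
    chartAt (Cn n) p x ∈ dom p → chartAt (Cn n) q x ∈ dom q →
    ∃ W ∈ 𝓝 (chartAt (Cn n) p x), W ⊆ dom p ∧
      ∃ h : Cn n → ℂ, AnalyticOnNhd ℂ h W ∧ (∀ z ∈ W, h z ≠ 0) ∧
      ∀ z ∈ W, ∀ v : Fin (n - k) → Cn n,
        ω p z v = h z * ω q ((chartAt (Cn n) q) ((chartAt (Cn n) p).symm z))
          (fun i => fderiv ℂ (fun y => (chartAt (Cn n) q) ((chartAt (Cn n) p).symm y)) z (v i))

/-- The singular set of a distribution on a manifold. -/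
def MDist.sing (D : MDist n k M) : Set M :=
  {x | D.ω x (chartAt (Cn n) x x) = 0}

/-- A one-dimensional singular holomorphic foliation on a complex `n`-manifold `M`:
around each point it is given, in the chart at that point, by a holomorphic vector field
with singular set of codimension at least 2; on overlaps the local vector fields agree,
up to a nonvanishing holomorphic factor, under the differentials of the transition maps. -/
structure MFol1 (n : ℕ) (M : Type*) [TopologicalSpace M] [ChartedSpace (Cn n) M] where
  V : M → VF n
  dom : M → Set (Cn n)
  dom_open : ∀ p, IsOpen (dom p)
  dom_sub : ∀ p, dom p ⊆ (chartAt (Cn n) p).target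
  dom_mem : ∀ p, chartAt (Cn n) p p ∈ dom p
  hol : ∀ p, AnalyticOnNhd ℂ (V p) (dom p)
  codim : ∀ p, CodimGE n ({z ∈ dom p | V p z = 0}) 2
  compat : ∀ p q : M, ∀ x : M, x ∈ (chartAt (Cn n) p).source → x ∈ (chartAt (Cn n) q).source →
    chartAt (Cn n) p x ∈ dom p → chartAt (Cn n) q x ∈ dom q →
    ∃ W ∈ 𝓝 (chartAt (Cn n) p x), W ⊆ dom p ∧
      ∃ h : Cn n → ℂ, AnalyticOnNhd ℂ h W ∧ (∀ z ∈ W, h z ≠ 0) ∧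
      ∀ z ∈ W,
        fderiv ℂ (fun y => (chartAt (Cn n) q) ((chartAt (Cn n) p).symm y)) z (V p z)
          = h z • V q ((chartAt (Cn n) q) ((chartAt (Cn n) p).symm z))

/-- The singular set of a one-dimensional foliation on a manifold. -/
def MFol1.sing (G : MFol1 n M) : Set M :=
  {x | G.V x (chartAt (Cn n) x x) = 0}

/-- The foliation `G` is tangent to the distribution `D`. -/
def MTangent (G : MFol1 n M) (D : MDist n k M) : Prop :=
  ∀ p : M, ∀ z ∈ G.dom p ∩ D.dom p, TangentAt (D.ω p) (G.V p) z

/-- `G` locally divides `D` at `p` : in the chart at `p`, the germ of the defining vector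
field of `G` divides the germ of the defining form of `D`. -/
def MLocDividesAt (G : MFol1 n M) (D : MDist n k M) (p : M) : Prop :=
  DividesAt (G.V p) (D.ω p) (chartAt (Cn n) p p)

/-- The linear rank of `G` is at least `r`: at every singular point `p`, the rank of the
derivative at (the chart image of) `p` of the defining vector field is at least `r`. -/
def MLinRankGE (G : MFol1 n M) (r : ℕ) : Prop :=
  ∀ p ∈ MFol1.sing G, r ≤ rkAt (G.V p) (chartAt (Cn n) p p)

/-- The stalk of the tangent sheaf of `D` at `p` is a free module with `r` generators. -/
def MStalkFreeWith (D : MDist n k M) (p : M) (r : ℕ) : Prop :=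
  ∃ Xs : Fin r → VF n, (∀ i, AnalyticAt ℂ (Xs i) (chartAt (Cn n) p p)) ∧
    (∀ i, ∀ᶠ z in 𝓝 (chartAt (Cn n) p p), TangentAt (D.ω p) (Xs i) z) ∧
    FreeGensAt (D.ω p) Xs (chartAt (Cn n) p p)

/-- (a) The tangent sheaf of `D` is locally free of rank `k`: near every point there are
`k` holomorphic tangent vector fields which freely generate every stalk. -/
def MPropA (D : MDist n k M) : Prop :=
  ∀ p : M, ∃ U : Set (Cn n), IsOpen U ∧ chartAt (Cn n) p p ∈ U ∧ U ⊆ D.dom p ∧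
    ∃ Xs : Fin k → VF n, (∀ i, AnalyticOnNhd ℂ (Xs i) U) ∧
      (∀ i, ∀ z ∈ U, TangentAt (D.ω p) (Xs i) z) ∧
      ∀ z ∈ U, FreeGensAt (D.ω p) Xs z

/-- (b) Near every point, `T_D` is the direct sum of the tangent sheaves of `k`
one-dimensional foliations (defined by vector fields with singular set of codim `≥ 2`). -/
def MPropB (D : MDist n k M) : Prop :=
  ∀ p : M, ∃ U : Set (Cn n), IsOpen U ∧ chartAt (Cn n) p p ∈ U ∧ U ⊆ D.dom p ∧
    ∃ Xs : Fin k → VF n, (∀ i, AnalyticOnNhd ℂ (Xs i) U) ∧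
      (∀ i, CodimGE n {z ∈ U | Xs i z = 0} 2) ∧
      (∀ i, ∀ z ∈ U, TangentAt (D.ω p) (Xs i) z) ∧
      ∀ z ∈ U, FreeGensAt (D.ω p) Xs z

/-- (c) Near every point, a form `i_{X_1} ⋯ i_{X_k} Θ` defines `D`. -/
def MPropC (h : n = k + (n - k)) (D : MDist n k M) : Prop :=
  ∀ p : M, ∃ U : Set (Cn n), IsOpen U ∧ chartAt (Cn n) p p ∈ U ∧ U ⊆ D.dom p ∧
    ∃ (Xs : Fin k → VF n) (Θ : Form n n) (u : Cn n → ℂ),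
      (∀ i, AnalyticOnNhd ℂ (Xs i) U) ∧ HolFormOn U Θ ∧
      AnalyticOnNhd ℂ u U ∧ (∀ z ∈ U, u z ≠ 0) ∧
      ∀ z ∈ U, ∀ v : Fin (n - k) → Cn n,
        D.ω p z v = u z * Θ z (fun i => Fin.append (fun a => Xs a z) v (Fin.cast h i))

/-- (d) At every point, a form `i_{X_1} ⋯ i_{X_k} Θ` defines the germ of `D`. -/
def MPropD (h : n = k + (n - k)) (D : MDist n k M) : Prop :=
  ∀ p : M, ∃ (Xs : Fin k → VF n) (Θ : Form n n) (u : Cn n → ℂ),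
    (∀ i, AnalyticAt ℂ (Xs i) (chartAt (Cn n) p p)) ∧ HolFormAt (chartAt (Cn n) p p) Θ ∧
    AnalyticAt ℂ u (chartAt (Cn n) p p) ∧ u (chartAt (Cn n) p p) ≠ 0 ∧
    ∀ᶠ z in 𝓝 (chartAt (Cn n) p p), ∀ v : Fin (n - k) → Cn n,
      D.ω p z v = u z * Θ z (fun i => Fin.append (fun a => Xs a z) v (Fin.cast h i))

/-- (e) Every stalk of `T_D` is a free module with `k` generators. -/
def MPropE (D : MDist n k M) : Prop :=
  ∀ p : M, MStalkFreeWith D p k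

/-- A subset `S` of the complex manifold `M` is analytic: it is closed and locally,
in charts, the common zero set of finitely many holomorphic functions. -/
def MIsAnalytic (n : ℕ) {M : Type*} [TopologicalSpace M] [ChartedSpace (Cn n) M] (S : Set M) : Prop :=
  IsClosed S ∧ ∀ p : M, ∃ W ∈ 𝓝 (chartAt (Cn n) p p), ∃ (r : ℕ) (f : Fin r → Cn n → ℂ),
    (∀ i, AnalyticOnNhd ℂ (f i) W) ∧
    ∀ z ∈ W ∩ (chartAt (Cn n) p).target, ((chartAt (Cn n) p).symm z ∈ S ↔ ∀ i, f i z = 0)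

/-- Irreducible analytic subsets of `M`. -/
def MIrredAnalytic (n : ℕ) {M : Type*} [TopologicalSpace M] [ChartedSpace (Cn n) M] (S : Set M) : Prop :=
  MIsAnalytic n S ∧ S.Nonempty ∧
    ∀ S1 S2 : Set M, MIsAnalytic n S1 → MIsAnalytic n S2 → S = S1 ∪ S2 → S = S1 ∨ S = S2

/-- `C` is an irreducible component of `V ⊆ M`. -/
def MIrredComponentOf (n : ℕ) {M : Type*} [TopologicalSpace M] [ChartedSpace (Cn n) M] (V C : Set M) : Prop :=
  MIrredAnalytic n C ∧ C ⊆ V ∧ ∀ C', MIrredAnalytic n C' → C ⊆ C' → C' ⊆ V → C' = C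

/-- The local dimension of `S ⊆ M` at `p` equals `d` (via Hausdorff dimension of chart
images on small neighborhoods). -/
def MLocDimEq (n : ℕ) {M : Type*} [TopologicalSpace M] [ChartedSpace (Cn n) M] (S : Set M) (p : M) (d : ℕ) : Prop :=
  ∀ᶠ U in (𝓝 p).smallSets,
    dimH (chartAt (Cn n) p '' (S ∩ U ∩ (chartAt (Cn n) p).source)) = ((2 * d : ℕ) : ℝ≥0∞)

/-- The dimension of `S ⊆ M` equals `d`. -/
def MDimEq (n : ℕ) {M : Type*} [TopologicalSpace M] [ChartedSpace (Cn n) M] (S : Set M) (d : ℕ) : Prop :=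
  (∀ p : M, ∀ᶠ U in (𝓝 p).smallSets,
    dimH (chartAt (Cn n) p '' (S ∩ U ∩ (chartAt (Cn n) p).source)) ≤ ((2 * d : ℕ) : ℝ≥0∞)) ∧
  ∃ p : M, MLocDimEq n S p d

end Manifold

end

noncomputable section

namespace S8aux

variable {n : ℕ}

/-- standard basis vectors of `ℂⁿ`. -/
def e0 (n : ℕ) (k : Fin n) : Cn n := Pi.single k 1

lemma sum_repr (x : Cn n) : (∑ k, x k • e0 n k) = x := by
  funext j
  simp [e0, Finset.sum_apply, Pi.single_apply]

lemma update_c0 {d : ℕ} (a w : Cn n) (v : Fin d → Cn n) :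
    Function.update (Fin.cons a v : Fin (d+1) → Cn n) 0 w = Fin.cons w v := by
  funext i
  refine Fin.cases ?_ (fun j => ?_) i
  · simp
  · simp [Function.update_of_ne (Fin.succ_ne_zero j)]

lemma update_c1 {d : ℕ} (a b w : Cn n) (v : Fin d → Cn n) :
    Function.update (Fin.cons a (Fin.cons b v) : Fin (d+2) → Cn n) (0 : Fin (d+1)).succ w
      = Fin.cons a (Fin.cons w v) := by
  funext i
  refine Fin.cases ?_ (fun j => ?_) i
  · rw [Function.update_of_ne (Fin.succ_ne_zero (0:Fin (d+1))).symm]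
    simp
  · refine Fin.cases ?_ (fun k => ?_) j
    · simp
    · rw [Function.update_of_ne]
      · simp
      · exact fun h => by
          have := Fin.succ_injective _ h
          exact (Fin.succ_ne_zero k) this

/-- Expansion of the first slot of an alternating map in the standard basis. -/
lemma expand0 {d : ℕ} (Φ : AlternatingMap ℂ (Cn n) ℂ (Fin (d+1))) (W : Cn n)
    (v : Fin d → Cn n) :
    Φ (Fin.cons W v) = ∑ k, W k * Φ (Fin.cons (e0 n k) v) := by
  classical
  calc Φ (Fin.cons W v)
      = Φ (Function.update (Fin.cons W v : Fin (d+1) → Cn n) 0 (∑ k, W k • e0 n k)) := by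
        rw [sum_repr, update_c0]
    _ = ∑ k, Φ (Function.update (Fin.cons W v : Fin (d+1) → Cn n) 0 (W k • e0 n k)) :=
        Φ.toMultilinearMap.map_update_sum Finset.univ 0 (fun k => W k • e0 n k) _
    _ = ∑ k, W k * Φ (Fin.cons (e0 n k) v) := by
        refine Finset.sum_congr rfl fun k _ => ?_
        rw [Φ.map_update_smul, update_c0]
        simp

/-- Expansion of the second slot. -/
lemma expand1 {d : ℕ} (Φ : AlternatingMap ℂ (Cn n) ℂ (Fin (d+2))) (a W : Cn n)
    (v : Fin d → Cn n) :
    Φ (Fin.cons a (Fin.cons W v)) = ∑ k, W k * Φ (Fin.cons a (Fin.cons (e0 n k) v)) := by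
  classical
  calc Φ (Fin.cons a (Fin.cons W v))
      = Φ (Function.update (Fin.cons a (Fin.cons W v) : Fin (d+2) → Cn n) (0 : Fin (d+1)).succ
          (∑ k, W k • e0 n k)) := by rw [sum_repr, update_c1]
    _ = ∑ k, Φ (Function.update (Fin.cons a (Fin.cons W v) : Fin (d+2) → Cn n) (0 : Fin (d+1)).succ
          (W k • e0 n k)) :=
        Φ.toMultilinearMap.map_update_sum Finset.univ _ (fun k => W k • e0 n k) _
    _ = ∑ k, W k * Φ (Fin.cons a (Fin.cons (e0 n k) v)) := by
        refine Finset.sum_congr rfl fun k _ => ?_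
        rw [Φ.map_update_smul, update_c1]
        simp

/-- Linearity of the first slot. -/
lemma cons_lin0 {d : ℕ} (Φ : AlternatingMap ℂ (Cn n) ℂ (Fin (d+1))) (c₁ c₂ : ℂ) (u₁ u₂ : Cn n)
    (v : Fin d → Cn n) :
    Φ (Fin.cons (c₁ • u₁ + c₂ • u₂) v) = c₁ * Φ (Fin.cons u₁ v) + c₂ * Φ (Fin.cons u₂ v) := by
  classical
  rw [← update_c0 u₁ (c₁ • u₁ + c₂ • u₂) v, Φ.map_update_add, Φ.map_update_smul, Φ.map_update_smul,
    update_c0, update_c0]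
  simp

/-- Linearity of the second slot. -/
lemma cons_lin1 {d : ℕ} (Φ : AlternatingMap ℂ (Cn n) ℂ (Fin (d+2))) (a : Cn n) (c₁ c₂ : ℂ)
    (u₁ u₂ : Cn n) (v : Fin d → Cn n) :
    Φ (Fin.cons a (Fin.cons (c₁ • u₁ + c₂ • u₂) v))
      = c₁ * Φ (Fin.cons a (Fin.cons u₁ v)) + c₂ * Φ (Fin.cons a (Fin.cons u₂ v)) := by
  classical
  rw [← update_c1 a u₁ (c₁ • u₁ + c₂ • u₂) v, Φ.map_update_add, Φ.map_update_smul,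
    Φ.map_update_smul, update_c1, update_c1]
  simp

/-- swap of the two first entries. -/
lemma cons_swap {d : ℕ} (x y : Cn n) (v : Fin d → Cn n) :
    Fin.cons x (Fin.cons y v) = (Fin.cons y (Fin.cons x v) : Fin (d+2) → Cn n)
      ∘ (Equiv.swap (0 : Fin (d+2)) 1) := by
  funext i
  refine Fin.cases ?_ (fun j => ?_) i
  · simp [Equiv.swap_apply_left]
  · refine Fin.cases ?_ (fun k => ?_) j
    · simp [Equiv.swap_apply_right]
    · have h : Equiv.swap (0 : Fin (d+2)) 1 k.succ.succ = k.succ.succ := by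
        refine Equiv.swap_apply_of_ne_of_ne ?_ ?_ <;>
          simp [Fin.ext_iff, Fin.val_succ]
      simp [h]

lemma alt_comm01 {d : ℕ} (Φ : AlternatingMap ℂ (Cn n) ℂ (Fin (d+2))) (x y : Cn n)
    (v : Fin d → Cn n) :
    Φ (Fin.cons x (Fin.cons y v)) = - Φ (Fin.cons y (Fin.cons x v)) := by
  rw [cons_swap, Φ.map_swap]
  exact Fin.zero_ne_one

/-- Full expansion of an alternating map over the standard basis. -/
lemma full_expand {d : ℕ} (Φ : AlternatingMap ℂ (Cn n) ℂ (Fin d)) (v : Fin d → Cn n) :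
    Φ v = ∑ s : Fin d → Fin n, (∏ j, v j (s j)) * Φ (fun i => e0 n (s i)) := by
  classical
  have h1 : v = fun i => ∑ k, (v i k) • e0 n k := by
    funext i; rw [sum_repr]
  calc Φ v = Φ (fun i => ∑ k, (v i k) • e0 n k) := by rw [← h1]
    _ = ∑ s : Fin d → Fin n, Φ (fun i => (v i (s i)) • e0 n (s i)) :=
        Φ.toMultilinearMap.map_sum (fun i k => (v i k) • e0 n k)
    _ = ∑ s : Fin d → Fin n, (∏ j, v j (s j)) * Φ (fun i => e0 n (s i)) := by
        refine Finset.sum_congr rfl fun s _ => ?_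
        have := Φ.toMultilinearMap.map_smul_univ (fun i => v i (s i)) (fun i => e0 n (s i))
        simpa [smul_eq_mul] using this

lemma zero_of_basis {d : ℕ} (Φ : AlternatingMap ℂ (Cn n) ℂ (Fin d))
    (h : ∀ s : Fin d → Fin n, Φ (fun i => e0 n (s i)) = 0) (v : Fin d → Cn n) : Φ v = 0 := by
  rw [full_expand]
  simp [h]

/-- If an alternating map kills `(y, w, ·)` then it kills any tuple containing `y` and `w`. -/
lemma vanish_pair {d : ℕ} (T : AlternatingMap ℂ (Cn n) ℂ (Fin (d+2))) (y w : Cn n)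
    (h : ∀ r : Fin d → Cn n, T (Fin.cons y (Fin.cons w r)) = 0)
    (u : Fin (d+2) → Cn n) (i j : Fin (d+2)) (hij : i ≠ j) (hy : u i = y) (hw : u j = w) :
    T u = 0 := by
  classical
  set σ1 := Equiv.swap (0 : Fin (d+2)) i with hσ1
  set u1 := u ∘ σ1 with hu1
  have hu10 : u1 0 = y := by simp [hu1, hσ1, Equiv.swap_apply_left, hy]
  set j1 := σ1 j with hj1
  have hu1j1 : u1 j1 = w := by
    simp only [hu1, hj1, hσ1, Function.comp_apply, Equiv.swap_apply_self]
    exact hw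
  have hj1ne : j1 ≠ 0 := by
    simp only [hj1, hσ1]
    intro hcon
    have : j = i := by
      have := congrArg (Equiv.swap (0 : Fin (d+2)) i) hcon
      simpa [Equiv.swap_apply_self, Equiv.swap_apply_left] using this
    exact hij this.symm
  set σ2 := Equiv.swap (1 : Fin (d+2)) j1 with hσ2
  set u2 := u1 ∘ σ2 with hu2
  have hu20 : u2 0 = y := by
    have h0 : σ2 0 = 0 := by
      refine Equiv.swap_apply_of_ne_of_ne ?_ ?_
      · exact Fin.zero_ne_one
      · exact fun hh => hj1ne hh.symm
    simp [hu2, h0, hu10]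
  have hu21 : u2 1 = w := by
    simp [hu2, hσ2, Equiv.swap_apply_left, hu1j1]
  have h2 : T u2 = 0 := by
    have : u2 = Fin.cons y (Fin.cons w (fun k => u2 k.succ.succ)) := by
      funext i'
      refine Fin.cases ?_ (fun j' => ?_) i'
      · exact hu20
      · refine Fin.cases ?_ (fun k => ?_) j'
        · exact hu21
        · simp
    rw [this]
    exact h _
  have h1 : T u1 = 0 := by
    rcases eq_or_ne (1 : Fin (d+2)) j1 with hcase | hcase
    · have : σ2 = Equiv.refl _ := by rw [hσ2, ← hcase, Equiv.swap_self]
      have : u2 = u1 := by rw [hu2, this]; rfl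
      rwa [← this]
    · have := T.map_swap (v := u1) hcase
      rw [← hσ2, ← hu2] at this
      rw [← neg_eq_zero, ← this, h2]
  rcases eq_or_ne (0 : Fin (d+2)) i with hcase | hcase
  · have : σ1 = Equiv.refl _ := by rw [hσ1, ← hcase, Equiv.swap_self]
    have : u1 = u := by rw [hu1, this]; rfl
    rwa [← this]
  · have := T.map_swap (v := u) hcase
    rw [← hσ1, ← hu1] at this
    rw [← neg_eq_zero, ← this, h1]

/-- The key pointwise proportionality lemma. -/
lemma key_prop {m : ℕ} (hmn : m + 2 = n)
    (S : AlternatingMap ℂ (Cn n) ℂ (Fin (m+2))) (T : AlternatingMap ℂ (Cn n) ℂ (Fin (m+1)))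
    (y w : Cn n)
    (hvan : ∀ (u : Fin (m+1) → Cn n) (i j : Fin (m+1)), i ≠ j → u i = y → u j = w → T u = 0)
    (s₀ : Fin m → Fin n)
    (hQ : S (Fin.cons y (Fin.cons w (fun i => e0 n (s₀ i)))) ≠ 0) (s : Fin m → Fin n) :
    (S (Fin.cons y (Fin.cons w (fun i => e0 n (s₀ i)))) * T (Fin.cons y (fun i => e0 n (s i)))
      = T (Fin.cons y (fun i => e0 n (s₀ i))) * S (Fin.cons y (Fin.cons w (fun i => e0 n (s i)))))
    ∧ (S (Fin.cons y (Fin.cons w (fun i => e0 n (s₀ i)))) * T (Fin.cons w (fun i => e0 n (s i)))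
      = T (Fin.cons w (fun i => e0 n (s₀ i))) * S (Fin.cons y (Fin.cons w (fun i => e0 n (s i))))) := by
  classical
  set BB : Fin (m+2) → Cn n := Fin.cons y (Fin.cons w (fun i => e0 n (s₀ i))) with hBB
  have hind : LinearIndependent ℂ BB := by
    by_contra hcon
    exact hQ (S.map_linearDependent BB hcon)
  have hcard : Fintype.card (Fin (m+2)) = Module.finrank ℂ (Cn n) := by
    rw [Module.finrank_fintype_fun_eq_card]
    simp [hmn]
  let b : Module.Basis (Fin (m+2)) ℂ (Cn n) := basisOfLinearIndependentOfCardEqFinrank hind hcard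
  have hb : ⇑b = BB := coe_basisOfLinearIndependentOfCardEqFinrank hind hcard
  have main : ∀ x : Cn n, x = y ∨ x = w →
      (S BB) • (T.curryLeft x)
        = (T (Fin.cons x (fun i => e0 n (s₀ i)))) • ((S.curryLeft y).curryLeft w) := by
    intro x hx
    refine Module.Basis.ext_alternating b (fun v hv => ?_)
    have hbv : ∀ i, b (v i) = BB (v i) := fun i => by rw [hb]
    simp only [AlternatingMap.smul_apply, AlternatingMap.curryLeft_apply_apply, smul_eq_mul]
    by_cases h0 : ∃ i, v i = 0
    · obtain ⟨i, hi⟩ := h0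
      have hyv : b (v i) = y := by rw [hbv i, hi]; rfl
      have t1 : T (Matrix.vecCons x fun i => b (v i)) = 0 := by
        rcases hx with rfl | rfl
        · refine T.map_eq_zero_of_eq _ (i := i.succ) (j := 0) ?_ (Fin.succ_ne_zero i)
          simp [Matrix.cons_val_succ, Matrix.cons_val_zero, hyv]
        · refine hvan _ i.succ 0 (Fin.succ_ne_zero i) ?_ ?_
          · simp [Matrix.cons_val_succ, hyv]
          · simp
      have t2 : S (Matrix.vecCons y (Matrix.vecCons w fun i => b (v i))) = 0 := by
        refine S.map_eq_zero_of_eq _ (i := i.succ.succ) (j := 0) ?_ (Fin.succ_ne_zero _)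
        simp [Matrix.cons_val_succ, Matrix.cons_val_zero, hyv]
      rw [t1, t2]; ring
    · by_cases h1 : ∃ i, v i = 1
      · obtain ⟨i, hi⟩ := h1
        have hwv : b (v i) = w := by rw [hbv i, hi]; rfl
        have t1 : T (Matrix.vecCons x fun i => b (v i)) = 0 := by
          rcases hx with rfl | rfl
          · refine hvan _ 0 i.succ (Fin.succ_ne_zero i).symm ?_ ?_
            · simp
            · simp [Matrix.cons_val_succ, hwv]
          · refine T.map_eq_zero_of_eq _ (i := i.succ) (j := 0) ?_ (Fin.succ_ne_zero i)
            simp [Matrix.cons_val_succ, Matrix.cons_val_zero, hwv]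
        have t2 : S (Matrix.vecCons y (Matrix.vecCons w fun i => b (v i))) = 0 := by
          refine S.map_eq_zero_of_eq _ (i := i.succ.succ) (j := 1) ?_ ?_
          · simp [Matrix.cons_val_succ, Matrix.cons_val_one, hwv]
          · simp only [ne_eq, Fin.ext_iff, Fin.val_succ, Fin.val_one]
            omega
        rw [t1, t2]; ring
      · push_neg at h0 h1
        have hvk : ∀ i, ∃ k : Fin m, v i = k.succ.succ := by
          intro i
          obtain ⟨j, hj⟩ := Fin.eq_succ_of_ne_zero (h0 i)
          have hjne : j ≠ 0 := by
            intro hcon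
            apply h1 i
            rw [hj, hcon]
            rfl
          obtain ⟨k, hk⟩ := Fin.eq_succ_of_ne_zero hjne
          exact ⟨k, by rw [hj, hk]⟩
        choose vv hvv using hvk
        have hbval : (fun i => b (v i)) = fun i => e0 n (s₀ (vv i)) := by
          funext i
          rw [hbv i, hvv i, hBB]
          simp [Fin.cons_succ]
        have hvvinj : Function.Injective vv := by
          intro i i' hii
          apply hv
          rw [hvv i, hvv i', hii]
        let σ : Equiv.Perm (Fin m) := Equiv.ofBijective vv (Finite.injective_iff_bijective.mp hvvinj)
        have hσ : ∀ i, σ i = vv i := fun i => rfl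
        have hcomp : (fun i => e0 n (s₀ (vv i))) = (fun i => e0 n (s₀ i)) ∘ σ := by
          funext i; simp [hσ]
        set ε : ℂ := ((Equiv.Perm.sign σ : ℤ) : ℂ) with hε
        have hsmul : ∀ c : ℂ, (Equiv.Perm.sign σ) • c = ε * c := by
          intro c
          rw [Units.smul_def, zsmul_eq_mul, hε]
        have e1 : T (Matrix.vecCons x fun i => b (v i)) = ε * T (Fin.cons x (fun i => e0 n (s₀ i))) := by
          have : T (Matrix.vecCons x fun i => b (v i)) = (T.curryLeft x) ((fun i => e0 n (s₀ i)) ∘ σ) := by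
            rw [hbval, hcomp]; rfl
          rw [this, (T.curryLeft x).map_perm, hsmul]
          rfl
        have e2 : S (Matrix.vecCons y (Matrix.vecCons w fun i => b (v i)))
            = ε * S BB := by
          have : S (Matrix.vecCons y (Matrix.vecCons w fun i => b (v i)))
              = ((S.curryLeft y).curryLeft w) ((fun i => e0 n (s₀ i)) ∘ σ) := by
            rw [hbval, hcomp]; rfl
          rw [this, ((S.curryLeft y).curryLeft w).map_perm, hsmul]
          rfl
        rw [e1, e2]
        ring
  constructor
  · have := DFunLike.congr_fun (main y (Or.inl rfl)) (fun i => e0 n (s i))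
    simp [smul_eq_mul, mul_comm] at this ⊢
    exact this
  · have := DFunLike.congr_fun (main w (Or.inr rfl)) (fun i => e0 n (s i))
    simp [smul_eq_mul, mul_comm] at this ⊢
    exact this

lemma analyticAt_proj (k : Fin n) {W : Cn n → Cn n} {c : Cn n} (hW : AnalyticAt ℂ W c) :
    AnalyticAt ℂ (fun z => W z k) c :=
  ((ContinuousLinearMap.proj k : (Fin n → ℂ) →L[ℂ] ℂ).analyticAt _).comp hW

lemma anplug1 {d : ℕ} {Φ : Cn n → AlternatingMap ℂ (Cn n) ℂ (Fin (d+1))} {W : Cn n → Cn n}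
    {c : Cn n} (v : Fin d → Cn n)
    (hΦ : ∀ k, AnalyticAt ℂ (fun z => Φ z (Fin.cons (e0 n k) v)) c)
    (hW : AnalyticAt ℂ W c) :
    AnalyticAt ℂ (fun z => Φ z (Fin.cons (W z) v)) c := by
  have h : (fun z => Φ z (Fin.cons (W z) v)) = fun z => ∑ k, (W z k) * Φ z (Fin.cons (e0 n k) v) :=
    funext fun z => expand0 (Φ z) (W z) v
  rw [h]
  exact Finset.analyticAt_fun_sum _ fun k _ => (analyticAt_proj k hW).mul (hΦ k)

lemma anplug2 {d : ℕ} {Φ : Cn n → AlternatingMap ℂ (Cn n) ℂ (Fin (d+2))} {W1 W2 : Cn n → Cn n}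
    {c : Cn n} (v : Fin d → Cn n)
    (hΦ : ∀ k l, AnalyticAt ℂ (fun z => Φ z (Fin.cons (e0 n k) (Fin.cons (e0 n l) v))) c)
    (h1 : AnalyticAt ℂ W1 c) (h2 : AnalyticAt ℂ W2 c) :
    AnalyticAt ℂ (fun z => Φ z (Fin.cons (W1 z) (Fin.cons (W2 z) v))) c := by
  have h : (fun z => Φ z (Fin.cons (W1 z) (Fin.cons (W2 z) v)))
      = fun z => ∑ k, (W1 z k) * Φ z (Fin.cons (e0 n k) (Fin.cons (W2 z) v)) :=
    funext fun z => expand0 (Φ z) (W1 z) _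
  rw [h]
  refine Finset.analyticAt_fun_sum _ fun k _ => (analyticAt_proj k h1).mul ?_
  have h' : (fun z => Φ z (Fin.cons (e0 n k) (Fin.cons (W2 z) v)))
      = fun z => ∑ l, (W2 z l) * Φ z (Fin.cons (e0 n k) (Fin.cons (e0 n l) v)) :=
    funext fun z => expand1 (Φ z) _ (W2 z) v
  rw [h']
  exact Finset.analyticAt_fun_sum _ fun l _ => (analyticAt_proj l h2).mul (hΦ k l)

lemma finrank_Cn : Module.finrank ℝ (Cn n) = 2 * n := by
  rw [finrank_real_of_complex]
  rw [Module.finrank_fintype_fun_eq_card]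
  simp

/-- Contradiction: a set containing a ball around `0` cannot satisfy the codimension
condition. -/
lemma dim_contra {U : Set (Cn n)} (hU : U ∈ 𝓝 (0:Cn n)) {V : Set (Cn n)}
    {ε : ℝ} (hε : 0 < ε) (hsub : Metric.ball (0:Cn n) ε ⊆ V)
    (hdim : dimH (V ∩ U) + 2 * ((2:ℕ) : ℝ≥0∞) ≤ 2 * (n : ℝ≥0∞)) : False := by
  obtain ⟨ε', hε', hsub'⟩ := Metric.mem_nhds_iff.mp hU
  have hball : Metric.ball (0:Cn n) (min ε ε') ⊆ V ∩ U :=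
    fun x hx => ⟨hsub (Metric.ball_subset_ball (min_le_left _ _) hx),
      hsub' (Metric.ball_subset_ball (min_le_right _ _) hx)⟩
  have h1 : dimH (Metric.ball (0:Cn n) (min ε ε')) = (Module.finrank ℝ (Cn n) : ℝ≥0∞) :=
    Real.dimH_of_mem_nhds (Metric.ball_mem_nhds _ (lt_min hε hε'))
  have h2 : ((2*n : ℕ) : ℝ≥0∞) ≤ dimH (V ∩ U) := by
    rw [← finrank_Cn (n := n), ← h1]
    exact dimH_mono hball
  have h3 : ((2*n : ℕ) : ℝ≥0∞) + 4 ≤ ((2*n : ℕ) : ℝ≥0∞) := by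
    refine le_trans (add_le_add_left h2 4) (le_trans ?_ le_rfl)
    have h4 : 2 * ((2:ℕ) : ℝ≥0∞) = 4 := by norm_num
    rw [← h4]
    refine le_trans hdim ?_
    push_cast
    exact le_rfl
  have h4 : ((2*n + 4 : ℕ) : ℝ≥0∞) ≤ ((2*n : ℕ) : ℝ≥0∞) := by
    push_cast
    push_cast at h3
    exact h3
  rw [Nat.cast_le] at h4
  omega

/-- There are points in `ker ℓ`, arbitrarily close to `0`, avoiding the projection of a
codimension-two set. -/
lemma exists_ker_point (hn : 1 ≤ n) (ℓ : Cn n →ₗ[ℂ] ℂ) {aa : Cn n} (hla : ℓ aa = 1)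
    {A : Set (Cn n)} (hdim : dimH A + 2 * ((2:ℕ):ℝ≥0∞) ≤ 2 * (n:ℝ≥0∞))
    {ε : ℝ} (hε : 0 < ε) :
    ∃ x : Cn n, ℓ x = 0 ∧ ‖x‖ < ε ∧ x ∉ (fun z => z - ℓ z • aa) '' A := by
  classical
  by_contra hcon
  push_neg at hcon
  -- the kernel of ℓ
  set K : Submodule ℂ (Cn n) := LinearMap.ker ℓ with hK
  -- dimensions
  have hsurj : Function.Surjective ℓ := by
    intro c
    refine ⟨c • aa, ?_⟩
    rw [map_smul, hla, smul_eq_mul, mul_one]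
  have hrange : LinearMap.range ℓ = ⊤ := LinearMap.range_eq_top.mpr hsurj
  have hkerdim : Module.finrank ℂ K = n - 1 := by
    have h := LinearMap.finrank_range_add_finrank_ker ℓ
    rw [hrange, finrank_top, ← hK] at h
    have h2 : Module.finrank ℂ (Cn n) = n := by
      rw [Module.finrank_fintype_fun_eq_card]; simp
    have h3 : Module.finrank ℂ ℂ = 1 := Module.finrank_self ℂ
    omega
  have hkerR : Module.finrank ℝ K = 2 * (n - 1) := by
    rw [finrank_real_of_complex, hkerdim]
  -- the projection map
  set πL : Cn n →ₗ[ℂ] Cn n := LinearMap.id - ℓ.smulRight aa with hπL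
  have hπfun : ∀ z, πL z = z - ℓ z • aa := by
    intro z; simp [hπL]
  set πC : Cn n →L[ℂ] Cn n := LinearMap.toContinuousLinearMap πL with hπC
  have hπCfun : (πC : Cn n → Cn n) = fun z => z - ℓ z • aa := by
    funext z
    rw [hπC, LinearMap.coe_toContinuousLinearMap']
    exact hπfun z
  -- the image has small dimension
  have himdim : dimH ((fun z => z - ℓ z • aa) '' A) ≤ dimH A := by
    rw [← hπCfun]
    exact πC.lipschitz.dimH_image_le A
  -- but it contains a ball of the kernel
  set T : Set K := Subtype.val ⁻¹' ((fun z => z - ℓ z • aa) '' A) with hT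
  have hball : Metric.ball (0 : K) ε ⊆ T := by
    intro k hk
    have hknorm : ‖(k : Cn n)‖ < ε := by
      simpa [Metric.mem_ball, dist_eq_norm] using hk
    have hkker : ℓ (k : Cn n) = 0 := k.2
    exact hcon (k : Cn n) hkker hknorm
  have hdimT : ((2*(n-1) : ℕ) : ℝ≥0∞) ≤ dimH T := by
    have h1 : dimH (Metric.ball (0 : K) ε) = (Module.finrank ℝ K : ℝ≥0∞) :=
      Real.dimH_of_mem_nhds (Metric.ball_mem_nhds _ hε)
    rw [← hkerR, ← h1]
    exact dimH_mono hball
  have hdimval : dimH T = dimH (Subtype.val '' T) := (isometry_subtype_coe.dimH_image T).symm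
  have hsub2 : Subtype.val '' T ⊆ (fun z => z - ℓ z • aa) '' A := Set.image_preimage_subset _ _
  have hchain : ((2*(n-1) : ℕ) : ℝ≥0∞) ≤ dimH A :=
    le_trans hdimT (le_trans (le_of_eq hdimval) (le_trans (dimH_mono hsub2) himdim))
  have hfin : ((2*(n-1) : ℕ) : ℝ≥0∞) + 4 ≤ ((2*n : ℕ) : ℝ≥0∞) := by
    refine le_trans (add_le_add_left hchain 4) ?_
    have h4 : 2 * ((2:ℕ) : ℝ≥0∞) = 4 := by norm_num
    rw [← h4]
    refine le_trans hdim ?_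
    push_cast
    exact le_rfl
  have : ((2*(n-1) + 4 : ℕ) : ℝ≥0∞) ≤ ((2*n : ℕ) : ℝ≥0∞) := by
    push_cast
    push_cast at hfin
    exact hfin
  rw [Nat.cast_le] at this
  omega

set_option maxHeartbeats 2000000 in
lemma forward_contra (n m : ℕ) (hn : 3 ≤ n) (hm : n = m + 2)
    (ω : Cn n → AlternatingMap ℂ (Cn n) ℂ (Fin m)) (Y Z : Cn n → Cn n)
    (Θ : Cn n → AlternatingMap ℂ (Cn n) ℂ (Fin (m+2)))
    (hY : AnalyticAt ℂ Y 0) (hZ : AnalyticAt ℂ Z 0)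
    (hΘ : ∀ v : Fin (m+2) → Cn n, AnalyticAt ℂ (fun z => Θ z v) 0)
    (hdef : ∀ᶠ z in 𝓝 (0 : Cn n), ∀ v : Fin m → Cn n,
      ω z v = Θ z (Fin.cons (Y z) (Fin.cons (Z z) v)))
    (hcodim : ∃ U ∈ 𝓝 (0 : Cn n), {z | ω z = 0} ∩ U = ∅ ∨
      dimH ({z | ω z = 0} ∩ U) + 2 * ((2 : ℕ) : ℝ≥0∞) ≤ 2 * (n : ℝ≥0∞))
    (f g : Cn n → ℂ) (hf : AnalyticAt ℂ f 0) (hg : AnalyticAt ℂ g 0)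
    (X : Cn n → Cn n) (hX : ∀ᶠ z in 𝓝 (0 : Cn n), X z = f z • Y z + g z • Z z)
    (Θ' : Cn n → AlternatingMap ℂ (Cn n) ℂ (Fin (m+1)))
    (hΘ'hol : ∀ v : Fin (m+1) → Cn n, AnalyticAt ℂ (fun z => Θ' z v) 0)
    (hdiv : ∀ᶠ z in 𝓝 (0 : Cn n), ∀ v : Fin m → Cn n, ω z v = Θ' z (Fin.cons (X z) v))
    (hf0 : f 0 = 0) (hg0 : g 0 = 0) : False := by
  classical
  obtain ⟨m', rfl⟩ : ∃ m', m = m' + 1 := ⟨m - 1, by omega⟩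
  obtain ⟨U, hUnhds, hcodim'⟩ := hcodim
  have hX0 : X 0 = 0 := by
    have h := hX.self_of_nhds
    rw [h, hf0, hg0, zero_smul, zero_smul, add_zero]
  have hω0 : ω 0 = 0 := by
    ext v
    have h := hdiv.self_of_nhds v
    rw [h]
    have h2 : (0 : AlternatingMap ℂ (Cn n) ℂ (Fin (m'+1))) v = 0 := rfl
    rw [h2]
    refine (Θ' 0).map_coord_zero 0 ?_
    rw [Fin.cons_zero, hX0]
  have h0mem : (0 : Cn n) ∈ {z | ω z = 0} ∩ U := ⟨hω0, mem_of_mem_nhds hUnhds⟩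
  have hdimU : dimH ({z | ω z = 0} ∩ U) + 2 * ((2:ℕ) : ℝ≥0∞) ≤ 2 * (n : ℝ≥0∞) := by
    rcases hcodim' with h | h
    · exact absurd h (Nonempty.ne_empty ⟨0, h0mem⟩)
    · exact h
  -- a common ball on which everything is analytic and the identities hold
  have hYev := hY.eventually_analyticAt
  have hZev := hZ.eventually_analyticAt
  have hfev := hf.eventually_analyticAt
  have hgev := hg.eventually_analyticAt
  have hΘev : ∀ᶠ z in 𝓝 (0:Cn n), ∀ (k l : Fin n) (s : Fin (m'+1) → Fin n),
      AnalyticAt ℂ (fun z' => Θ z' (Fin.cons (e0 n k) (Fin.cons (e0 n l)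
        (fun i => e0 n (s i))))) z := by
    rw [eventually_all]; intro k
    rw [eventually_all]; intro l
    rw [eventually_all]; intro s
    exact (hΘ _).eventually_analyticAt
  have hΘ'ev1 : ∀ᶠ z in 𝓝 (0:Cn n), ∀ (k : Fin n) (s : Fin (m'+1) → Fin n),
      AnalyticAt ℂ (fun z' => Θ' z' (Fin.cons (e0 n k) (fun i => e0 n (s i)))) z := by
    rw [eventually_all]; intro k
    rw [eventually_all]; intro s
    exact (hΘ'hol _).eventually_analyticAt
  have hΘ'ev2 : ∀ᶠ z in 𝓝 (0:Cn n), ∀ (k l : Fin n) (s : Fin m' → Fin n),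
      AnalyticAt ℂ (fun z' => Θ' z' (Fin.cons (e0 n k) (Fin.cons (e0 n l)
        (fun i => e0 n (s i))))) z := by
    rw [eventually_all]; intro k
    rw [eventually_all]; intro l
    rw [eventually_all]; intro s
    exact (hΘ'hol _).eventually_analyticAt
  obtain ⟨R, hRpos, hball⟩ := Metric.eventually_nhds_iff_ball.mp
    (hdef.and (hX.and (hdiv.and (hYev.and (hZev.and (hfev.and (hgev.and (hΘev.and
      (hΘ'ev1.and hΘ'ev2)))))))))
  set B := Metric.ball (0 : Cn n) R with hB
  have hBmem : (0:Cn n) ∈ B := Metric.mem_ball_self hRpos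
  have Hdef : ∀ z ∈ B, ∀ v : Fin (m'+1) → Cn n,
      ω z v = Θ z (Fin.cons (Y z) (Fin.cons (Z z) v)) := fun z hz => (hball z hz).1
  have HX : ∀ z ∈ B, X z = f z • Y z + g z • Z z := fun z hz => (hball z hz).2.1
  have Hdiv : ∀ z ∈ B, ∀ v, ω z v = Θ' z (Fin.cons (X z) v) := fun z hz => (hball z hz).2.2.1
  have HYan : ∀ z ∈ B, AnalyticAt ℂ Y z := fun z hz => (hball z hz).2.2.2.1
  have HZan : ∀ z ∈ B, AnalyticAt ℂ Z z := fun z hz => (hball z hz).2.2.2.2.1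
  have Hfan : ∀ z ∈ B, AnalyticAt ℂ f z := fun z hz => (hball z hz).2.2.2.2.2.1
  have Hgan : ∀ z ∈ B, AnalyticAt ℂ g z := fun z hz => (hball z hz).2.2.2.2.2.2.1
  have HΘan := fun z hz => (hball z hz).2.2.2.2.2.2.2.1
  have HΘ'an1 := fun z hz => (hball z hz).2.2.2.2.2.2.2.2.1
  have HΘ'an2 := fun z hz => (hball z hz).2.2.2.2.2.2.2.2.2
  -- coefficient functions
  set Qf : (Fin (m'+1) → Fin n) → Cn n → ℂ :=
    fun s z => Θ z (Fin.cons (Y z) (Fin.cons (Z z) (fun i => e0 n (s i)))) with hQf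
  set Af : (Fin (m'+1) → Fin n) → Cn n → ℂ :=
    fun s z => Θ' z (Fin.cons (Y z) (fun i => e0 n (s i))) with hAf
  set Bf : (Fin (m'+1) → Fin n) → Cn n → ℂ :=
    fun s z => Θ' z (Fin.cons (Z z) (fun i => e0 n (s i))) with hBf
  set Df : (Fin m' → Fin n) → Cn n → ℂ :=
    fun s z => Θ' z (Fin.cons (Y z) (Fin.cons (Z z) (fun i => e0 n (s i)))) with hDf
  have hQan : ∀ s, ∀ z ∈ B, AnalyticAt ℂ (Qf s) z := fun s z hz =>
    anplug2 _ (fun k l => HΘan z hz k l s) (HYan z hz) (HZan z hz)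
  have hAan : ∀ s, ∀ z ∈ B, AnalyticAt ℂ (Af s) z := fun s z hz =>
    anplug1 _ (fun k => HΘ'an1 z hz k s) (HYan z hz)
  have hBan : ∀ s, ∀ z ∈ B, AnalyticAt ℂ (Bf s) z := fun s z hz =>
    anplug1 _ (fun k => HΘ'an1 z hz k s) (HZan z hz)
  have hDan : ∀ s, ∀ z ∈ B, AnalyticAt ℂ (Df s) z := fun s z hz =>
    anplug2 _ (fun k l => HΘ'an2 z hz k l s) (HYan z hz) (HZan z hz)
  -- the basic identities
  have hQω : ∀ z ∈ B, ∀ s, Qf s z = ω z (fun i => e0 n (s i)) := fun z hz s =>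
    (Hdef z hz _).symm
  have hE1 : ∀ z ∈ B, ∀ s, f z * Af s z + g z * Bf s z = Qf s z := by
    intro z hz s
    have h1 : Qf s z = Θ' z (Fin.cons (X z) (fun i => e0 n (s i))) := by
      rw [hQω z hz s]
      exact Hdiv z hz _
    rw [h1, HX z hz, cons_lin0 (Θ' z) (f z) (g z) (Y z) (Z z) _]
  have hfD : ∀ z ∈ B, ∀ s : Fin m' → Fin n, f z * Df s z = 0 := by
    intro z hz s
    have h0 : ω z (Fin.cons (Z z) (fun i => e0 n (s i))) = 0 := by
      rw [Hdef z hz]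
      refine (Θ z).map_eq_zero_of_eq _ (i := (0 : Fin (m'+2)).succ)
        (j := (0 : Fin (m'+1)).succ.succ) ?_ ?_
      · simp only [Fin.cons_succ, Fin.cons_zero]
      · simp only [ne_eq, Fin.ext_iff, Fin.val_succ, Fin.val_zero]
        omega
    have h1 : ω z (Fin.cons (Z z) (fun i => e0 n (s i)))
        = f z * Df s z + g z * Θ' z (Fin.cons (Z z) (Fin.cons (Z z) (fun i => e0 n (s i)))) := by
      rw [Hdiv z hz, HX z hz, cons_lin0 (Θ' z) (f z) (g z) (Y z) (Z z) _]
    have h2 : Θ' z (Fin.cons (Z z) (Fin.cons (Z z) (fun i => e0 n (s i)))) = 0 := by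
      refine (Θ' z).map_eq_zero_of_eq _ (i := 0) (j := (0 : Fin (m'+1)).succ) ?_
        (Fin.succ_ne_zero _).symm
      simp
    rw [h2, mul_zero, add_zero] at h1
    rw [← h1, h0]
  have hgD : ∀ z ∈ B, ∀ s : Fin m' → Fin n, g z * Df s z = 0 := by
    intro z hz s
    have h0 : ω z (Fin.cons (Y z) (fun i => e0 n (s i))) = 0 := by
      rw [Hdef z hz]
      refine (Θ z).map_eq_zero_of_eq _ (i := 0)
        (j := (0 : Fin (m'+1)).succ.succ) ?_ ?_
      · simp only [Fin.cons_succ, Fin.cons_zero]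
      · exact (Fin.succ_ne_zero _).symm
    have h1 : ω z (Fin.cons (Y z) (fun i => e0 n (s i)))
        = f z * Θ' z (Fin.cons (Y z) (Fin.cons (Y z) (fun i => e0 n (s i))))
          + g z * Θ' z (Fin.cons (Z z) (Fin.cons (Y z) (fun i => e0 n (s i)))) := by
      rw [Hdiv z hz, HX z hz, cons_lin0 (Θ' z) (f z) (g z) (Y z) (Z z) _]
    have h2 : Θ' z (Fin.cons (Y z) (Fin.cons (Y z) (fun i => e0 n (s i)))) = 0 := by
      refine (Θ' z).map_eq_zero_of_eq _ (i := 0) (j := (0 : Fin (m'+1)).succ) ?_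
        (Fin.succ_ne_zero _).symm
      simp
    have h3 : Θ' z (Fin.cons (Z z) (Fin.cons (Y z) (fun i => e0 n (s i))))
        = - Df s z := alt_comm01 (Θ' z) (Z z) (Y z) _
    rw [h2, mul_zero, zero_add, h3] at h1
    have := h1.symm.trans h0
    rw [mul_neg, neg_eq_zero] at this
    exact this
  -- dichotomy
  by_cases hDex : ∃ s : Fin m' → Fin n, ∃ z₀ ∈ B, Df s z₀ ≠ 0
  · -- case (i): f and g vanish identically near 0
    obtain ⟨s, z₀, hz₀B, hz₀⟩ := hDex
    have hDev : ∀ᶠ z in 𝓝 z₀, Df s z ≠ 0 ∧ z ∈ B :=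
      (((hDan s z₀ hz₀B).continuousAt.eventually_ne hz₀)).and
        (Metric.isOpen_ball.eventually_mem hz₀B)
    have hfz : f =ᶠ[𝓝 z₀] 0 := by
      filter_upwards [hDev] with z hz
      exact (mul_eq_zero.mp (hfD z hz.2 s)).resolve_right hz.1
    have hgz : g =ᶠ[𝓝 z₀] 0 := by
      filter_upwards [hDev] with z hz
      exact (mul_eq_zero.mp (hgD z hz.2 s)).resolve_right hz.1
    have hf_eq : EqOn f 0 B :=
      AnalyticOnNhd.eqOn_zero_of_preconnected_of_eventuallyEq_zero (fun z hz => Hfan z hz)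
        ((convex_ball _ _).isPreconnected) hz₀B hfz
    have hg_eq : EqOn g 0 B :=
      AnalyticOnNhd.eqOn_zero_of_preconnected_of_eventuallyEq_zero (fun z hz => Hgan z hz)
        ((convex_ball _ _).isPreconnected) hz₀B hgz
    have hωB : Metric.ball (0 : Cn n) R ⊆ {z | ω z = 0} := by
      intro z hz
      have hz' : z ∈ B := hz
      show ω z = 0
      ext v
      rw [Hdiv z hz' v]
      have h2 : (0 : AlternatingMap ℂ (Cn n) ℂ (Fin (m'+1))) v = 0 := rfl
      rw [h2]
      refine (Θ' z).map_coord_zero 0 ?_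
      rw [Fin.cons_zero, HX z hz']
      have := hf_eq hz'
      have h4 := hg_eq hz'
      simp only [Pi.zero_apply] at this h4
      rw [this, h4, zero_smul, zero_smul, add_zero]
    exact dim_contra hUnhds hRpos hωB hdimU
  · -- case (ii)
    push_neg at hDex
    -- Θ' z kills any tuple containing both Y z and Z z
    have hTvan : ∀ z ∈ B, ∀ r : Fin m' → Cn n,
        Θ' z (Fin.cons (Y z) (Fin.cons (Z z) r)) = 0 := by
      intro z hz r
      have hzero : ∀ s : Fin m' → Fin n,
          ((((Θ' z).curryLeft (Y z)).curryLeft (Z z))) (fun i => e0 n (s i)) = 0 := by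
        intro s
        exact hDex s z hz
      exact zero_of_basis ((((Θ' z).curryLeft (Y z)).curryLeft (Z z))) hzero r
    have hvan : ∀ z ∈ B, ∀ (u : Fin (m'+2) → Cn n) (i j : Fin (m'+2)), i ≠ j →
        u i = Y z → u j = Z z → Θ' z u = 0 := fun z hz =>
      vanish_pair (Θ' z) (Y z) (Z z) (hTvan z hz)
    -- if all the Q's vanish identically, ω vanishes identically : contradiction
    by_cases hQex : ∃ s, ∃ z₀ ∈ B, Qf s z₀ ≠ 0
    swap
    · push_neg at hQex
      have hωB : Metric.ball (0:Cn n) R ⊆ {z | ω z = 0} := by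
        intro z hz
        show ω z = 0
        ext v
        have h1 : ω z v = ((((Θ z).curryLeft (Y z)).curryLeft (Z z))) v := Hdef z hz v
        have h2 : (0 : AlternatingMap ℂ (Cn n) ℂ (Fin (m'+1))) v = 0 := rfl
        rw [h1, h2]
        exact zero_of_basis _ (fun s => hQex s z hz) v
      exact dim_contra hUnhds hRpos hωB hdimU
    obtain ⟨sstar, z₁, hz₁B, hz₁⟩ := hQex
    -- pointwise proportionality
    have hmn : m' + 1 + 2 = n := hm.symm
    have hkey : ∀ z ∈ B, ∀ s₀ : Fin (m'+1) → Fin n, Qf s₀ z ≠ 0 → ∀ s,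
        (Qf s₀ z * Af s z = Af s₀ z * Qf s z) ∧ (Qf s₀ z * Bf s z = Bf s₀ z * Qf s z) :=
      fun z hz s₀ hQ0 s =>
        key_prop (m := m'+1) hmn (Θ z) (Θ' z) (Y z) (Z z) (hvan z hz) s₀ hQ0 s
    -- the quotient functions
    set lam : Cn n → ℂ := fun z =>
      if h : ∃ s, Qf s z ≠ 0 then Af h.choose z / Qf h.choose z else 0 with hlamdef
    set mu : Cn n → ℂ := fun z =>
      if h : ∃ s, Qf s z ≠ 0 then Bf h.choose z / Qf h.choose z else 0 with hmudef
    have hlamQ : ∀ z ∈ B, (∃ s, Qf s z ≠ 0) → ∀ s,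
        lam z * Qf s z = Af s z ∧ mu z * Qf s z = Bf s z := by
      intro z hz h s
      obtain ⟨hA, hB⟩ := hkey z hz h.choose h.choose_spec s
      have hc := h.choose_spec
      constructor
      · have h1 : lam z = Af h.choose z / Qf h.choose z := by
          rw [hlamdef]
          simp only [dif_pos h]
        rw [h1, div_mul_eq_mul_div, ← hA, mul_comm (Qf h.choose z) (Af s z), mul_div_assoc,
          div_self hc, mul_one]
      · have h1 : mu z = Bf h.choose z / Qf h.choose z := by
          rw [hmudef]
          simp only [dif_pos h]
        rw [h1, div_mul_eq_mul_div, ← hB, mul_comm (Qf h.choose z) (Bf s z), mul_div_assoc,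
          div_self hc, mul_one]
    have hfg1 : ∀ z ∈ B, (∃ s, Qf s z ≠ 0) → f z * lam z + g z * mu z = 1 := by
      intro z hz h
      obtain ⟨hA, hB⟩ := hlamQ z hz h h.choose
      have hE := hE1 z hz h.choose
      have hQ0 := h.choose_spec
      have hmain : (f z * lam z + g z * mu z) * Qf h.choose z = 1 * Qf h.choose z := by
        rw [add_mul, mul_assoc, mul_assoc, hA, hB, hE, one_mul]
      exact mul_right_cancel₀ hQ0 hmain
    have hlam_an : ∀ z₀ ∈ B, (∃ s, Qf s z₀ ≠ 0) →
        AnalyticAt ℂ lam z₀ ∧ AnalyticAt ℂ mu z₀ := by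
      intro z₀ hz₀ h
      obtain ⟨s, hs⟩ := h
      have hev : ∀ᶠ z in 𝓝 z₀, Qf s z ≠ 0 ∧ z ∈ B :=
        ((hQan s z₀ hz₀).continuousAt.eventually_ne hs).and
          (Metric.isOpen_ball.eventually_mem hz₀)
      constructor
      · refine ((hAan s z₀ hz₀).div (hQan s z₀ hz₀) hs).congr ?_
        filter_upwards [hev] with z hzz
        have h2 := (hlamQ z hzz.2 ⟨s, hzz.1⟩ s).1
        rw [Pi.div_apply, ← h2, mul_div_cancel_right₀ _ hzz.1]
      · refine ((hBan s z₀ hz₀).div (hQan s z₀ hz₀) hs).congr ?_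
        filter_upwards [hev] with z hzz
        have h2 := (hlamQ z hzz.2 ⟨s, hzz.1⟩ s).2
        rw [Pi.div_apply, ← h2, mul_div_cancel_right₀ _ hzz.1]
    -- radii
    obtain ⟨εU, hεU, hUsub⟩ := Metric.mem_nhds_iff.mp hUnhds
    set ρ : ℝ := min R εU / 2 with hρdef
    have hρpos : 0 < ρ := div_pos (lt_min hRpos hεU) two_pos
    have hρR : ρ < R := by
      have h1 : min R εU ≤ R := min_le_left _ _
      have h2 : ρ ≤ R / 2 := by rw [hρdef]; linarith
      linarith
    have hρU : ρ < εU := by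
      have h1 : min R εU ≤ εU := min_le_right _ _
      have h2 : ρ ≤ εU / 2 := by rw [hρdef]; linarith
      linarith
    have hcball_B : ∀ z ∈ Metric.closedBall (0:Cn n) ρ, z ∈ B := by
      intro z hz
      rw [Metric.mem_closedBall] at hz
      rw [hB, Metric.mem_ball]
      exact lt_of_le_of_lt hz hρR
    have hcball_U : ∀ z ∈ Metric.closedBall (0:Cn n) ρ, z ∈ U := by
      intro z hz
      rw [Metric.mem_closedBall] at hz
      exact hUsub (Metric.mem_ball.mpr (lt_of_le_of_lt hz hρU))
    -- a uniform bound for the numerators on the closed ball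
    have hcontsum : ContinuousOn
        (fun z => ∑ s : Fin (m'+1) → Fin n, (‖Af s z‖ + ‖Bf s z‖))
        (Metric.closedBall (0:Cn n) ρ) := by
      refine continuousOn_finset_sum _ (fun s _ => ?_)
      intro z hz
      exact (((hAan s z (hcball_B z hz)).continuousAt.norm).add
        ((hBan s z (hcball_B z hz)).continuousAt.norm)).continuousWithinAt
    obtain ⟨Cb, hCb⟩ := (isCompact_closedBall (0:Cn n) ρ).exists_bound_of_continuousOn hcontsum
    have hsum_nonneg : ∀ z, 0 ≤ ∑ s : Fin (m'+1) → Fin n, (‖Af s z‖ + ‖Bf s z‖) :=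
      fun z => Finset.sum_nonneg (fun s _ => by positivity)
    have hAb : ∀ s, ∀ z ∈ Metric.closedBall (0:Cn n) ρ, ‖Af s z‖ ≤ Cb ∧ ‖Bf s z‖ ≤ Cb := by
      intro s z hz
      have h1 := hCb z hz
      rw [Real.norm_eq_abs, abs_of_nonneg (hsum_nonneg z)] at h1
      have h2 : ‖Af s z‖ + ‖Bf s z‖ ≤ ∑ s : Fin (m'+1) → Fin n, (‖Af s z‖ + ‖Bf s z‖) :=
        Finset.single_le_sum (f := fun s => ‖Af s z‖ + ‖Bf s z‖) (fun s _ => by positivity)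
          (Finset.mem_univ s)
      constructor
      · have := norm_nonneg (Bf s z)
        linarith
      · have := norm_nonneg (Af s z)
        linarith
    have hCb0 : 0 ≤ Cb := by
      have h1 := hCb 0 (Metric.mem_closedBall_self hρpos.le)
      exact le_trans (norm_nonneg _) h1
    -- choose the direction a
    have haex : ∃ a : Cn n, ‖a‖ < ρ/4 ∧ Qf sstar a ≠ 0 := by
      by_contra hcon2
      push_neg at hcon2
      have hzero : Qf sstar =ᶠ[𝓝 (0:Cn n)] 0 := by
        filter_upwards [Metric.ball_mem_nhds (0:Cn n) (by positivity : (0:ℝ) < ρ/4)] with z hz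
        refine hcon2 z ?_
        rw [Metric.mem_ball, dist_zero_right] at hz
        exact hz
      have heq := AnalyticOnNhd.eqOn_zero_of_preconnected_of_eventuallyEq_zero
        (fun z hz => hQan sstar z hz) ((convex_ball _ _).isPreconnected) hBmem hzero
      exact hz₁ (heq hz₁B)
    obtain ⟨a, haρ, haQ⟩ := haex
    have ha0 : a ≠ 0 := by
      intro hcon2
      apply haQ
      rw [hcon2]
      have h1 := hQω 0 hBmem sstar
      rw [hω0] at h1
      exact h1
    have haB : ∀ ζ : ℂ, ‖ζ‖ < 3 → ζ • a ∈ B := by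
      intro ζ hζ
      rw [hB, Metric.mem_ball, dist_zero_right, norm_smul]
      have h1 : ‖ζ‖ * ‖a‖ ≤ 3 * (ρ/4) := by
        refine mul_le_mul hζ.le haρ.le (norm_nonneg a) (by norm_num)
      have h2 : 3 * (ρ/4) < R := by
        have h3 : ρ < R := hρR
        linarith
      linarith
    -- restriction to the line ℂ a
    set φ : ℂ → ℂ := fun ζ => Qf sstar (ζ • a) with hφdef
    have hφan : ∀ ζ : ℂ, ‖ζ‖ < 3 → AnalyticAt ℂ φ ζ := by
      intro ζ hζ
      have hsm : AnalyticAt ℂ (fun ζ' : ℂ => ζ' • a) ζ := by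
        have h2 := ((ContinuousLinearMap.id ℂ ℂ).smulRight a).analyticAt ζ
        have h3 : ⇑((ContinuousLinearMap.id ℂ ℂ).smulRight a) = fun ζ' : ℂ => ζ' • a := by
          funext ζ'
          simp
        rwa [h3] at h2
      have h4 := AnalyticAt.comp (g := Qf sstar) (f := fun ζ' : ℂ => ζ' • a) (x := ζ)
        (hQan sstar _ (haB ζ hζ)) hsm
      exact h4
    have hφ1 : φ 1 ≠ 0 := by
      simp only [hφdef, one_smul]
      exact haQ
    have hφnot : ¬ (∀ᶠ ζ in 𝓝 (0:ℂ), φ ζ = 0) := by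
      intro hcon2
      have h1mem : (1:ℂ) ∈ Metric.ball (0:ℂ) 3 := by
        rw [Metric.mem_ball, dist_zero_right]
        norm_num
      have heq := AnalyticOnNhd.eqOn_zero_of_preconnected_of_eventuallyEq_zero
        (fun ζ hζ => hφan ζ (by rwa [Metric.mem_ball, dist_zero_right] at hζ))
        ((convex_ball _ _).isPreconnected)
        (Metric.mem_ball_self (by norm_num : (0:ℝ) < 3)) hcon2
      exact hφ1 (heq h1mem)
    have hφne := (AnalyticAt.eventually_eq_zero_or_eventually_ne_zero
      (hφan 0 (by norm_num))).resolve_left hφnot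
    obtain ⟨ε₁, hε₁, hsub₁⟩ := Metric.mem_nhdsWithin_iff.mp hφne
    set r : ℝ := min (ε₁/2) 1 with hrdef
    have hrpos : 0 < r := lt_min (half_pos hε₁) one_pos
    have hr1 : r ≤ 1 := min_le_right _ _
    have hrε : r < ε₁ := lt_of_le_of_lt (min_le_left _ _) (half_lt_self hε₁)
    have hφsphere : ∀ ζ : ℂ, ‖ζ‖ = r → φ ζ ≠ 0 := by
      intro ζ hζ
      refine hsub₁ ⟨?_, ?_⟩
      · rw [Metric.mem_ball, dist_zero_right, hζ]
        exact hrε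
      · intro hcon2
        rw [Set.mem_singleton_iff] at hcon2
        rw [hcon2, norm_zero] at hζ
        exact absurd hζ.symm (ne_of_gt hrpos)
    -- the minimum of ‖φ‖ on the circle
    have hsphere_compact : IsCompact (Metric.sphere (0:ℂ) r) := isCompact_sphere _ _
    have hsphere_ne : (Metric.sphere (0:ℂ) r).Nonempty :=
      NormedSpace.sphere_nonempty.mpr hrpos.le
    have hφcont : ContinuousOn (fun ζ => ‖φ ζ‖) (Metric.sphere (0:ℂ) r) := by
      intro ζ hζ
      have hζn : ‖ζ‖ = r := by
        rw [Metric.mem_sphere, dist_zero_right] at hζ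
        exact hζ
      exact ((hφan ζ (by rw [hζn]; linarith)).continuousAt.norm).continuousWithinAt
    obtain ⟨ζ₀, hζ₀mem, hζ₀min⟩ := hsphere_compact.exists_isMinOn hsphere_ne hφcont
    set δ : ℝ := ‖φ ζ₀‖ with hδdef
    have hδpos : 0 < δ := by
      refine norm_pos_iff.mpr (hφsphere ζ₀ ?_)
      rw [Metric.mem_sphere, dist_zero_right] at hζ₀mem
      exact hζ₀mem
    have hδle : ∀ ζ : ℂ, ‖ζ‖ = r → δ ≤ ‖φ ζ‖ := by
      intro ζ hζ
      exact hζ₀min (by rw [Metric.mem_sphere, dist_zero_right]; exact hζ)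
    -- tube lemma: a uniform lower bound for ‖Qf sstar‖ on nearby circles
    have htube : ∃ η > 0, ∀ x : Cn n, ‖x‖ < η → ∀ ζ : ℂ, ‖ζ‖ = r →
        (x + ζ • a ∈ B ∧ δ/2 < ‖Qf sstar (x + ζ • a)‖) := by
      have hmc : Continuous (fun p : Cn n × ℂ => p.1 + p.2 • a) :=
        continuous_fst.add (continuous_snd.smul continuous_const)
      have hQcont : ContinuousOn (fun z => ‖Qf sstar z‖) B :=
        fun z hz => ((hQan sstar z hz).continuousAt.norm).continuousWithinAt
      have hopen : IsOpen (B ∩ (fun z => ‖Qf sstar z‖) ⁻¹' Ioi (δ/2)) :=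
        hQcont.isOpen_inter_preimage Metric.isOpen_ball isOpen_Ioi
      have hsub0 : ({(0 : Cn n)} : Set (Cn n)) ×ˢ Metric.sphere (0:ℂ) r ⊆
          (fun p : Cn n × ℂ => p.1 + p.2 • a) ⁻¹'
            (B ∩ (fun z => ‖Qf sstar z‖) ⁻¹' Ioi (δ/2)) := by
        rintro ⟨x, ζ⟩ ⟨hx, hζ⟩
        rw [Set.mem_singleton_iff] at hx
        rw [Metric.mem_sphere, dist_zero_right] at hζ
        subst hx
        rw [Set.mem_preimage]
        have hin : (0 : Cn n) + ζ • a = ζ • a := zero_add _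
        rw [hin]
        refine ⟨haB ζ (by rw [hζ]; linarith), ?_⟩
        rw [Set.mem_preimage, Set.mem_Ioi]
        have h1 : δ ≤ ‖Qf sstar (ζ • a)‖ := hδle ζ hζ
        linarith
      obtain ⟨v, w, hvopen, _, hv0, hws, hvw⟩ := generalized_tube_lemma isCompact_singleton
        hsphere_compact (hopen.preimage hmc) hsub0
      obtain ⟨η, hη, hηsub⟩ := Metric.isOpen_iff.mp hvopen 0 (hv0 rfl)
      refine ⟨η, hη, fun x hx ζ hζ => ?_⟩
      have hmemv : x ∈ v := hηsub (by rw [Metric.mem_ball, dist_zero_right]; exact hx)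
      have hmemw : ζ ∈ w := hws (by rw [Metric.mem_sphere, dist_zero_right]; exact hζ)
      have := hvw (Set.mk_mem_prod hmemv hmemw)
      rw [Set.mem_preimage] at this
      exact ⟨this.1, this.2⟩
    obtain ⟨η, hηpos, hηtube⟩ := htube
    -- a linear functional with ℓ a = 1
    obtain ⟨k₀, hk₀⟩ : ∃ k₀, a k₀ ≠ 0 := by
      by_contra hcon2
      push_neg at hcon2
      exact ha0 (funext hcon2)
    set ℓ : Cn n →ₗ[ℂ] ℂ := (a k₀)⁻¹ • (LinearMap.proj k₀ : Cn n →ₗ[ℂ] ℂ) with hℓdef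
    have hℓa : ℓ a = 1 := by
      rw [hℓdef]
      simp only [LinearMap.smul_apply, LinearMap.proj_apply, smul_eq_mul]
      exact inv_mul_cancel₀ hk₀
    -- smallness of f g near 0
    set M : ℝ := Cb / (δ/2) with hMdef
    have hM0 : 0 ≤ M := by
      rw [hMdef]
      positivity
    set κ : ℝ := 1/(2*(M+1)) with hκdef
    have hκpos : 0 < κ := by
      rw [hκdef]
      positivity
    have hfg_small : ∀ᶠ z in 𝓝 (0:Cn n), ‖f z‖ < κ ∧ ‖g z‖ < κ := by
      have h1 : ContinuousAt f 0 := hf.continuousAt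
      have h2 : ContinuousAt g 0 := hg.continuousAt
      have h3 : ∀ᶠ z in 𝓝 (0:Cn n), f z ∈ Metric.ball (0:ℂ) κ := by
        refine h1 ?_
        rw [hf0]
        exact Metric.ball_mem_nhds _ hκpos
      have h4 : ∀ᶠ z in 𝓝 (0:Cn n), g z ∈ Metric.ball (0:ℂ) κ := by
        refine h2 ?_
        rw [hg0]
        exact Metric.ball_mem_nhds _ hκpos
      filter_upwards [h3, h4] with z hz3 hz4
      rw [Metric.mem_ball, dist_zero_right] at hz3 hz4
      exact ⟨hz3, hz4⟩
    obtain ⟨η₂, hη₂pos, hη₂⟩ := Metric.eventually_nhds_iff_ball.mp hfg_small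
    -- choose the center zstar
    have hεz : 0 < min η (min η₂ (ρ/4)) := by
      refine lt_min hηpos (lt_min hη₂pos (by positivity))
    obtain ⟨zstar, hzker, hznorm, hznotin⟩ :=
      exists_ker_point (n := n) (by omega : 1 ≤ n) ℓ hℓa hdimU hεz
    have hπz : ∀ ζ : ℂ, zstar + ζ • a ∉ ({z | ω z = 0} ∩ U) := by
      intro ζ hmem
      apply hznotin
      refine ⟨zstar + ζ • a, hmem, ?_⟩
      show zstar + ζ • a - ℓ (zstar + ζ • a) • a = zstar
      rw [map_add, map_smul, hzker, hℓa, smul_eq_mul, mul_one, zero_add]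
      abel
    have hzη : ‖zstar‖ < η := lt_of_lt_of_le hznorm (min_le_left _ _)
    have hzη₂ : ‖zstar‖ < η₂ := lt_of_lt_of_le hznorm
      (le_trans (min_le_right _ _) (min_le_left _ _))
    have hzρ4 : ‖zstar‖ < ρ/4 := lt_of_lt_of_le hznorm
      (le_trans (min_le_right _ _) (min_le_right _ _))
    have hzdisc : ∀ ζ : ℂ, ‖ζ‖ ≤ r →
        (zstar + ζ • a ∈ Metric.closedBall (0:Cn n) ρ ∧ zstar + ζ • a ∈ B) := by
      intro ζ hζ
      have h1 : ‖zstar + ζ • a‖ ≤ ‖zstar‖ + ‖ζ‖ * ‖a‖ := by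
        refine le_trans (norm_add_le _ _) ?_
        rw [norm_smul]
      have h2 : ‖ζ‖ * ‖a‖ ≤ 1 * (ρ/4) :=
        mul_le_mul (le_trans hζ hr1) haρ.le (norm_nonneg _) (by norm_num)
      have h3 : ‖zstar + ζ • a‖ ≤ ρ/2 := by
        rw [one_mul] at h2
        linarith
      constructor
      · rw [Metric.mem_closedBall, dist_zero_right]
        linarith
      · rw [hB, Metric.mem_ball, dist_zero_right]
        linarith
    have hzoff : ∀ ζ : ℂ, ‖ζ‖ ≤ r → ∃ s, Qf s (zstar + ζ • a) ≠ 0 := by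
      intro ζ hζ
      obtain ⟨hc1, hc2⟩ := hzdisc ζ hζ
      have hU' : zstar + ζ • a ∈ U := hcball_U _ hc1
      have hωne : ω (zstar + ζ • a) ≠ 0 := fun h0 => hπz ζ ⟨h0, hU'⟩
      by_contra hcon2
      push_neg at hcon2
      apply hωne
      ext v
      have h1 : ω (zstar + ζ • a) v
          = ((((Θ (zstar + ζ • a)).curryLeft (Y (zstar + ζ • a))).curryLeft
              (Z (zstar + ζ • a)))) v := Hdef _ hc2 v
      have h2 : (0 : AlternatingMap ℂ (Cn n) ℂ (Fin (m'+1))) v = 0 := rfl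
      rw [h1, h2]
      exact zero_of_basis _ (fun s => hcon2 s) v
    -- max modulus bound for lam and mu at zstar
    have haff : ∀ ζ : ℂ, AnalyticAt ℂ (fun ζ' : ℂ => zstar + ζ' • a) ζ := by
      intro ζ
      have hsm : AnalyticAt ℂ (fun ζ' : ℂ => ζ' • a) ζ := by
        have h2 := ((ContinuousLinearMap.id ℂ ℂ).smulRight a).analyticAt ζ
        have h3 : ⇑((ContinuousLinearMap.id ℂ ℂ).smulRight a) = fun ζ' : ℂ => ζ' • a := by
          funext ζ'
          simp
        rwa [h3] at h2
      exact analyticAt_const.add hsm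
    have hMb : ∀ (lm : Cn n → ℂ), (∀ z₀ ∈ B, (∃ s, Qf s z₀ ≠ 0) → AnalyticAt ℂ lm z₀) →
        (∀ z₀ ∈ B, (∃ s, Qf s z₀ ≠ 0) → ∀ s, lm z₀ * Qf s z₀ = Af s z₀ ∨
          lm z₀ * Qf s z₀ = Bf s z₀) →
        ‖lm zstar‖ ≤ M := by
      intro lm hlm_an hlm_id
      set F : ℂ → ℂ := fun ζ => lm (zstar + ζ • a) with hFdef
      have hFan : ∀ ζ : ℂ, ‖ζ‖ ≤ r → AnalyticAt ℂ F ζ := by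
        intro ζ hζ
        have h1 := hlm_an _ (hzdisc ζ hζ).2 (hzoff ζ hζ)
        have h2 := AnalyticAt.comp (g := lm) (f := fun ζ' : ℂ => zstar + ζ' • a) (x := ζ)
          h1 (haff ζ)
        exact h2
      have hFdc : DiffContOnCl ℂ F (Metric.ball (0:ℂ) r) := by
        constructor
        · intro ζ hζ
          rw [Metric.mem_ball, dist_zero_right] at hζ
          exact ((hFan ζ hζ.le).differentiableAt).differentiableWithinAt
        · rw [closure_ball (0:ℂ) (ne_of_gt hrpos)]
          intro ζ hζ
          rw [Metric.mem_closedBall, dist_zero_right] at hζ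
          exact ((hFan ζ hζ).continuousAt).continuousWithinAt
      have hFb : ∀ ζ ∈ frontier (Metric.ball (0:ℂ) r), ‖F ζ‖ ≤ M := by
        intro ζ hζ
        rw [frontier_ball (0:ℂ) (ne_of_gt hrpos)] at hζ
        rw [Metric.mem_sphere, dist_zero_right] at hζ
        set p := zstar + ζ • a with hpdef
        obtain ⟨hpc, hpB⟩ := hzdisc ζ hζ.le
        have hQlow : δ/2 < ‖Qf sstar p‖ := (hηtube zstar hzη ζ hζ).2
        have hQne : Qf sstar p ≠ 0 := by
          intro h0
          rw [h0, norm_zero] at hQlow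
          linarith
        have hid := hlm_id p hpB ⟨sstar, hQne⟩ sstar
        have hnum : ‖lm p * Qf sstar p‖ ≤ Cb := by
          rcases hid with h | h
          · rw [h]; exact (hAb sstar p hpc).1
          · rw [h]; exact (hAb sstar p hpc).2
        rw [norm_mul] at hnum
        have hQpos : 0 < ‖Qf sstar p‖ := lt_trans (half_pos hδpos) hQlow
        have h5 : ‖lm p‖ ≤ Cb / ‖Qf sstar p‖ := by
          rw [le_div_iff₀ hQpos]
          exact hnum
        have h6 : Cb / ‖Qf sstar p‖ ≤ Cb / (δ/2) :=
          div_le_div_of_nonneg_left hCb0 (half_pos hδpos) hQlow.le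
        rw [hMdef]
        exact le_trans h5 h6
      have hcen := Complex.norm_le_of_forall_mem_frontier_norm_le Metric.isBounded_ball hFdc
        hFb (subset_closure (Metric.mem_ball_self hrpos))
      have hF0 : F 0 = lm zstar := by
        rw [hFdef]
        simp only [zero_smul, add_zero]
      rwa [hF0] at hcen
    have hlamM : ‖lam zstar‖ ≤ M :=
      hMb lam (fun z₀ h1 h2 => (hlam_an z₀ h1 h2).1)
        (fun z₀ h1 h2 s => Or.inl (hlamQ z₀ h1 h2 s).1)
    have hmuM : ‖mu zstar‖ ≤ M :=
      hMb mu (fun z₀ h1 h2 => (hlam_an z₀ h1 h2).2)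
        (fun z₀ h1 h2 s => Or.inr (hlamQ z₀ h1 h2 s).2)
    -- final contradiction
    have hz0B : zstar ∈ B := by
      rw [hB, Metric.mem_ball, dist_zero_right]
      have h1 : ρ/4 < R := by linarith
      linarith
    have hz0off : ∃ s, Qf s zstar ≠ 0 := by
      have h := hzoff 0 (by rw [norm_zero]; exact hrpos.le)
      rwa [zero_smul, add_zero] at h
    have hone := hfg1 zstar hz0B hz0off
    have hsm := hη₂ zstar (by rw [Metric.mem_ball, dist_zero_right]; exact hzη₂)
    have hnormle : (1:ℝ) ≤ ‖f zstar‖ * ‖lam zstar‖ + ‖g zstar‖ * ‖mu zstar‖ := by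
      have h1 : ‖f zstar * lam zstar + g zstar * mu zstar‖ = 1 := by
        rw [hone]
        exact norm_one
      calc (1:ℝ) = ‖f zstar * lam zstar + g zstar * mu zstar‖ := h1.symm
        _ ≤ ‖f zstar * lam zstar‖ + ‖g zstar * mu zstar‖ := norm_add_le _ _
        _ = ‖f zstar‖ * ‖lam zstar‖ + ‖g zstar‖ * ‖mu zstar‖ := by rw [norm_mul, norm_mul]
    have hlt : ‖f zstar‖ * ‖lam zstar‖ + ‖g zstar‖ * ‖mu zstar‖ ≤ κ * M + κ * M :=
      add_le_add (mul_le_mul hsm.1.le hlamM (norm_nonneg _) hκpos.le)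
        (mul_le_mul hsm.2.le hmuM (norm_nonneg _) hκpos.le)
    have hfinal : κ * M + κ * M < 1 := by
      have h1 : κ * M + κ * M = (2*M) / (2*(M+1)) := by
        rw [hκdef]
        field_simp
        ring
      rw [h1, div_lt_one (by positivity)]
      linarith
    linarith
end S8aux


end

/-- Lemma 4.2: Let `D` be a germ of two-dimensional distribution at
`0 ∈ ℂⁿ` defined by `ω = i_Y i_Z Θ` with `codim sing(ω) ≥ 2`, and `X = f Y + g Z` a germ
of vector field tangent to `D`. Then `X` divides `D` iff `f 0 ≠ 0` or `g 0 ≠ 0`. -/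
theorem statement_8 (n m : ℕ) (hn : 3 ≤ n) (hm : n = m + 2)
    (ω : Form n m) (Y Z : VF n) (Θ : Form n (m + 2))
    (hY : AnalyticAt ℂ Y 0) (hZ : AnalyticAt ℂ Z 0) (hΘ : HolFormAt 0 Θ)
    (hdef : ∀ᶠ z in 𝓝 (0 : Cn n), ∀ v : Fin m → Cn n,
      ω z v = Θ z (Fin.cons (Y z) (Fin.cons (Z z) v)))
    (hcodim : GermCodimGE n 0 (zeroLocus ω) 2)
    (f g : Cn n → ℂ) (hf : AnalyticAt ℂ f 0) (hg : AnalyticAt ℂ g 0)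
    (X : VF n) (hX : ∀ᶠ z in 𝓝 (0 : Cn n), X z = f z • Y z + g z • Z z)
    (htan : ∀ᶠ z in 𝓝 (0 : Cn n), TangentAt ω X z) :
    DividesAt X ω 0 ↔ (f 0 ≠ 0 ∨ g 0 ≠ 0) := by
  classical
  constructor
  · -- hard direction
    rintro ⟨Θ', hΘ'hol, hdiv⟩
    by_contra hcon
    push_neg at hcon
    obtain ⟨hf0, hg0⟩ := hcon
    exact S8aux.forward_contra n m hn hm ω Y Z Θ hY hZ hΘ hdef hcodim f g hf hg X hX
      Θ' hΘ'hol hdiv hf0 hg0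
  · -- easy direction
    rintro (hf0 | hg0)
    · -- f 0 ≠ 0 : use Θ' = -(1/f) • i_Z Θ
      refine ⟨fun z => (-(f z)⁻¹) • ((Θ z).curryLeft (Z z)), ?_, ?_⟩
      · intro v
        have h1 : AnalyticAt ℂ (fun z => Θ z (Fin.cons (Z z) v)) 0 :=
          S8aux.anplug1 v (fun k => hΘ _) hZ
        have h2 : AnalyticAt ℂ (fun z => -(f z)⁻¹) 0 := (hf.inv hf0).neg
        have h3 : (fun z => ((-(f z)⁻¹) • ((Θ z).curryLeft (Z z))) v)
            = fun z => (-(f z)⁻¹) * (Θ z (Fin.cons (Z z) v)) := by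
          funext z
          rw [AlternatingMap.smul_apply, smul_eq_mul]
          rfl
        rw [h3]
        exact h2.mul h1
      · have hfne : ∀ᶠ z in 𝓝 (0 : Cn n), f z ≠ 0 := hf.continuousAt.eventually_ne hf0
        filter_upwards [hdef, hX, hfne] with z h1 h2 h3
        intro v
        have e1 : ((-(f z)⁻¹) • ((Θ z).curryLeft (Z z))) (Fin.cons (X z) v)
            = (-(f z)⁻¹) * Θ z (Fin.cons (Z z) (Fin.cons (X z) v)) := by
          rw [AlternatingMap.smul_apply, smul_eq_mul]
          rfl
        rw [e1, h2, S8aux.cons_lin1 (Θ z) (Z z) (f z) (g z) (Y z) (Z z) v]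
        have ezz : Θ z (Fin.cons (Z z) (Fin.cons (Z z) v)) = 0 := by
          refine (Θ z).map_eq_zero_of_eq _ (i := 0) (j := (0 : Fin (m+1)).succ) ?_
            (Fin.succ_ne_zero _).symm
          simp
        have ezy : Θ z (Fin.cons (Z z) (Fin.cons (Y z) v))
            = - Θ z (Fin.cons (Y z) (Fin.cons (Z z) v)) :=
          S8aux.alt_comm01 (Θ z) (Z z) (Y z) v
        rw [ezz, ezy, ← h1 v]
        field_simp
        ring
    · -- g 0 ≠ 0 : use Θ' = (1/g) • i_Y Θ
      refine ⟨fun z => ((g z)⁻¹) • ((Θ z).curryLeft (Y z)), ?_, ?_⟩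
      · intro v
        have h1 : AnalyticAt ℂ (fun z => Θ z (Fin.cons (Y z) v)) 0 :=
          S8aux.anplug1 v (fun k => hΘ _) hY
        have h2 : AnalyticAt ℂ (fun z => (g z)⁻¹) 0 := hg.inv hg0
        have h3 : (fun z => (((g z)⁻¹) • ((Θ z).curryLeft (Y z))) v)
            = fun z => ((g z)⁻¹) * (Θ z (Fin.cons (Y z) v)) := by
          funext z
          rw [AlternatingMap.smul_apply, smul_eq_mul]
          rfl
        rw [h3]
        exact h2.mul h1
      · have hgne : ∀ᶠ z in 𝓝 (0 : Cn n), g z ≠ 0 := hg.continuousAt.eventually_ne hg0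
        filter_upwards [hdef, hX, hgne] with z h1 h2 h3
        intro v
        have e1 : (((g z)⁻¹) • ((Θ z).curryLeft (Y z))) (Fin.cons (X z) v)
            = ((g z)⁻¹) * Θ z (Fin.cons (Y z) (Fin.cons (X z) v)) := by
          rw [AlternatingMap.smul_apply, smul_eq_mul]
          rfl
        rw [e1, h2, S8aux.cons_lin1 (Θ z) (Y z) (f z) (g z) (Y z) (Z z) v]
        have eyy : Θ z (Fin.cons (Y z) (Fin.cons (Y z) v)) = 0 := by
          refine (Θ z).map_eq_zero_of_eq _ (i := 0) (j := (0 : Fin (m+1)).succ) ?_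
            (Fin.succ_ne_zero _).symm
          simp
        rw [eyy, ← h1 v]
        field_simp
        ring
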